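/- arXiv:1302.6863 — 5 statements merged into one kernel-verified Lean document; each statement's English description precedes it below -/
import Mathlib

section
/- Let G be a finite simple bipartite graph whose vertex set is partitioned into parts X and Y (every edge of G has one endpoint in X and one endpoint in Y). Then the number of vertices u ∈ Y whose degree in G is strictly greater than 2∇₁(G) is at most 2∇₁(G)·|X|. -/
/-- `H` is a shallow minor of `G` at depth `d`: there are pairwise disjoint nonempty
branch sets `ψ w ⊆ V(G)`, each inducing a subgraph of radius at most `d`, such that
distinct vertices of `H` are adjacent iff `G` has an edge between the corresponding
branch sets. -/
def IsShallowMinorAtDepth {V W : Type*} (G : SimpleGraph V) (d : ℕ)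
    (H : SimpleGraph W) : Prop :=
  ∃ ψ : W → Set V,
    (∀ w, (ψ w).Nonempty) ∧
    (∀ w₁ w₂, w₁ ≠ w₂ → Disjoint (ψ w₁) (ψ w₂)) ∧
    (∀ w, ∃ c : ψ w, ∀ u : ψ w,
      ∃ p : (SimpleGraph.induce (ψ w) G).Walk c u, p.length ≤ d) ∧
    (∀ w₁ w₂, w₁ ≠ w₂ →
      (H.Adj w₁ w₂ ↔ ∃ v₁ ∈ ψ w₁, ∃ v₂ ∈ ψ w₂, G.Adj v₁ v₂))

/-- The greatest reduced average density (grad) of rank `d`: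
the supremum of `|E(H)|/|V(H)|` over nonempty shallow minors `H` of `G` at depth `d`. -/
noncomputable def grad {V : Type*} (G : SimpleGraph V) (d : ℕ) : ℝ :=
  sSup { q : ℝ | ∃ (n : ℕ) (H : SimpleGraph (Fin n)), 0 < n ∧
    IsShallowMinorAtDepth G d H ∧ q = (H.edgeSet.ncard : ℝ) / (n : ℝ) }


/-! Contract the vertices `u ∈ Y` of degree `> 2∇₁(G)` one at a time, each into one of its
neighbours; the branch sets stay stars around the vertices of `X`, so they define a depth-1
minor on `X`. Contracting `u` into a neighbour `a` makes `a` adjacent to every other neighbour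
of `u`, so the minor gains an edge as long as two neighbours of `u` are not yet adjacent in it.
If all of them already are, then `u` and its neighbourhood span a depth-1 clique minor of order
`deg u + 1`, whose density `deg u / 2` is at most `∇₁(G)`: a contradiction. Thus the number of
such `u` is at most the number of edges of a depth-1 minor on `X`, i.e. at most `∇₁(G)·|X|`. -/

section

open SimpleGraph

variable {V W U : Type*} {G : SimpleGraph V} {d : ℕ} {H : SimpleGraph W}

lemma SimpleGraph.edgeSet_ncard_le_card_mul_card [Finite W] (H : SimpleGraph W) :
    H.edgeSet.ncard ≤ Nat.card W * Nat.card W :=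
  calc H.edgeSet.ncard ≤ Nat.card (Sym2 W) := Set.ncard_le_card _
    _ ≤ Nat.card (W × W) := Nat.card_le_card_of_surjective _ Sym2.mk_surjective
    _ = Nat.card W * Nat.card W := Nat.card_prod _ _

lemma grad_nonneg (G : SimpleGraph V) (d : ℕ) : 0 ≤ grad G d := by
  apply Real.sSup_nonneg
  rintro q ⟨n, H, -, -, rfl⟩
  positivity

namespace IsShallowMinorAtDepth

lemma card_le [Finite V] (h : IsShallowMinorAtDepth G d H) : Nat.card W ≤ Nat.card V := by
  obtain ⟨ψ, hne, hdisj, -, -⟩ := h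
  refine Nat.card_le_card_of_injective (fun w => (hne w).some) fun w₁ w₂ hw => ?_
  by_contra hne'
  have hmem : (hne w₁).some ∈ ψ w₂ := by
    simpa only [hw] using (hne w₂).some_mem
  exact Set.disjoint_left.mp (hdisj w₁ w₂ hne') (hne w₁).some_mem hmem

lemma of_iso {H' : SimpleGraph U} (h : IsShallowMinorAtDepth G d H) (e : H' ≃g H) :
    IsShallowMinorAtDepth G d H' := by
  obtain ⟨ψ, hne, hdisj, hrad, hadj⟩ := h
  refine ⟨ψ ∘ e, fun w => hne _, fun w₁ w₂ hw => hdisj _ _ (e.injective.ne hw),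
    fun w => hrad _, fun w₁ w₂ hw => ?_⟩
  rw [← e.map_adj_iff]
  exact hadj _ _ (e.injective.ne hw)

end IsShallowMinorAtDepth

lemma bddAbove_grad_set [Finite V] (G : SimpleGraph V) (d : ℕ) :
    BddAbove { q : ℝ | ∃ (n : ℕ) (H : SimpleGraph (Fin n)), 0 < n ∧
      IsShallowMinorAtDepth G d H ∧ q = (H.edgeSet.ncard : ℝ) / (n : ℝ) } := by
  refine ⟨Nat.card V, ?_⟩
  rintro q ⟨n, H, hn, hH, rfl⟩
  have hnV : (n : ℝ) ≤ Nat.card V := by exact_mod_cast (Nat.card_fin n).symm.trans_le hH.card_le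
  have hE : (H.edgeSet.ncard : ℝ) ≤ n * n := by
    exact_mod_cast (by simpa using H.edgeSet_ncard_le_card_mul_card)
  rw [div_le_iff₀ (by positivity)]
  calc (H.edgeSet.ncard : ℝ) ≤ n * n := hE
    _ ≤ Nat.card V * n := by gcongr

namespace IsShallowMinorAtDepth

theorem edgeSet_ncard_le [Finite V] [Finite W] (h : IsShallowMinorAtDepth G d H) :
    (H.edgeSet.ncard : ℝ) ≤ grad G d * Nat.card W := by
  rcases Nat.eq_zero_or_pos (Nat.card W) with hW | hW
  · have : IsEmpty W := Finite.card_eq_zero_iff.mp hW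
    simp [Set.eq_empty_of_isEmpty H.edgeSet]
  · let e := SimpleGraph.Iso.map (Finite.equivFin W) H
    have hE : (H.map (Finite.equivFin W)).edgeSet.ncard = H.edgeSet.ncard := by
      rw [← Nat.card_coe_set_eq, ← Nat.card_coe_set_eq]
      exact Nat.card_congr e.symm.mapEdgeSet
    have hd : ((H.map _).edgeSet.ncard : ℝ) / Nat.card W ≤ grad G d :=
      le_csSup (bddAbove_grad_set G d) ⟨_, _, hW, h.of_iso e.symm, rfl⟩
    rwa [hE, div_le_iff₀ (by exact_mod_cast hW)] at hd

theorem card_le_two_mul_grad_add_one [Finite V] [Finite W]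
    (h : IsShallowMinorAtDepth G d (⊤ : SimpleGraph W)) :
    (Nat.card W : ℝ) ≤ 2 * grad G d + 1 := by
  classical
  have := Fintype.ofFinite W
  have htop : ((⊤ : SimpleGraph W).edgeSet.ncard : ℝ) = Nat.card W * (Nat.card W - 1) / 2 := by
    rw [← coe_edgeFinset, Set.ncard_coe_finset, card_edgeFinset_top_eq_card_choose_two,
      Nat.cast_choose_two, Nat.card_eq_fintype_card]
  have hd := h.edgeSet_ncard_le
  rw [htop] at hd
  nlinarith [grad_nonneg G d]

end IsShallowMinorAtDepth

section StarContraction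

def starSet (S : Set V) (f : V → V) (x : V) : Set V := insert x {v ∈ S | f v = x}

variable (G) in
/-- Each `v ∈ S` is contracted into `f v`, so `x` stands for its `starSet`. -/
def starContraction (S : Set V) (f : V → V) : SimpleGraph V where
  Adj x y := x ≠ y ∧ ∃ v₁ ∈ starSet S f x, ∃ v₂ ∈ starSet S f y, G.Adj v₁ v₂
  symm := ⟨fun _ _ ⟨hxy, v₁, h₁, v₂, h₂, hadj⟩ => ⟨hxy.symm, v₂, h₂, v₁, h₁, hadj.symm⟩⟩
  loopless := ⟨fun _ h => h.1 rfl⟩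

variable {S C : Set V} {f : V → V} {u a b : V}

lemma le_starContraction : G ≤ starContraction G S f :=
  fun x y hxy => ⟨hxy.ne, x, Set.mem_insert _ _, y, Set.mem_insert _ _, hxy⟩

theorem isShallowMinorAtDepth_one_induce_starContraction (hf : ∀ v ∈ S, G.Adj v (f v))
    (hCS : Disjoint C S) : IsShallowMinorAtDepth G 1 ((starContraction G S f).induce C) := by
  refine ⟨fun x => starSet S f x, fun x => ⟨x, Set.mem_insert _ _⟩, ?_, ?_, ?_⟩
  · intro x y hxy
    rw [Set.disjoint_left]
    rintro v (rfl | ⟨hvS, hvx⟩) (hvy | ⟨hvS', hvy⟩)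
    · exact hxy (Subtype.ext hvy)
    · exact Set.disjoint_left.mp hCS x.2 hvS'
    · exact Set.disjoint_left.mp hCS (hvy ▸ y.2) hvS
    · exact hxy (Subtype.ext (hvx.symm.trans hvy))
  · intro x
    refine ⟨⟨x, Set.mem_insert _ _⟩, ?_⟩
    rintro ⟨v, rfl | ⟨hvS, hvx⟩⟩
    · exact ⟨Walk.nil, zero_le_one⟩
    · have hxv : (G.induce (starSet S f x)).Adj ⟨x, Set.mem_insert _ _⟩ ⟨v, Or.inr ⟨hvS, hvx⟩⟩ :=
        (hvx ▸ (hf v hvS).symm : G.Adj x v)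
      exact ⟨hxv.toWalk, le_rfl⟩
  · intro x y hxy
    exact ⟨And.right, fun h => ⟨Subtype.coe_ne_coe.mpr hxy, h⟩⟩

lemma starSet_subset_insert_update [DecidableEq V] (hu : u ∉ S) (a x : V) :
    starSet S f x ⊆ starSet (insert u S) (Function.update f u a) x := by
  rintro v (rfl | ⟨hvS, hvx⟩)
  · exact Set.mem_insert _ _
  · refine Set.mem_insert_of_mem _ ⟨Set.mem_insert_of_mem _ hvS, ?_⟩
    rw [Function.update_of_ne (ne_of_mem_of_not_mem hvS hu), hvx]

lemma starContraction_le_insert_update [DecidableEq V] (hu : u ∉ S) (a : V) :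
    starContraction G S f ≤ starContraction G (insert u S) (Function.update f u a) :=
  fun x y ⟨hxy, v₁, h₁, v₂, h₂, hadj⟩ => ⟨hxy, v₁, starSet_subset_insert_update hu a x h₁,
    v₂, starSet_subset_insert_update hu a y h₂, hadj⟩

lemma starContraction_insert_update_adj [DecidableEq V] (hab : a ≠ b) (hub : G.Adj u b) :
    (starContraction G (insert u S) (Function.update f u a)).Adj a b :=
  ⟨hab, u, Set.mem_insert_of_mem _ ⟨Set.mem_insert _ _, Function.update_self ..⟩,
    b, Set.mem_insert _ _, hub⟩

theorem exists_not_adj_starContraction [Finite V] (hf : ∀ v ∈ S, G.Adj v (f v)) (hu : u ∉ S)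
    (hNS : Disjoint (G.neighborSet u) S)
    (hdeg : 2 * grad G 1 < ((G.neighborSet u).ncard : ℝ)) :
    ∃ a ∈ G.neighborSet u, ∃ b ∈ G.neighborSet u, a ≠ b ∧ ¬ (starContraction G S f).Adj a b := by
  by_contra! hadj
  set C := insert u (G.neighborSet u)
  have htop : (starContraction G S f).induce C = ⊤ := by
    refine eq_top_iff.mpr fun x y hxy => ?_
    obtain ⟨x, hx⟩ := x
    obtain ⟨y, hy⟩ := y
    have hne : x ≠ y := Subtype.coe_ne_coe.mpr hxy
    rcases hx with rfl | hx <;> rcases hy with rfl | hy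
    · exact absurd rfl hne
    · exact le_starContraction hy
    · exact le_starContraction hx.symm
    · exact hadj x hx y hy hne
  have hminor := isShallowMinorAtDepth_one_induce_starContraction hf
    (C := C) (Set.disjoint_insert_left.mpr ⟨hu, hNS⟩)
  rw [htop] at hminor
  have hcard := hminor.card_le_two_mul_grad_add_one
  rw [Nat.card_coe_set_eq, Set.ncard_insert_of_notMem G.notMem_neighborSet_self] at hcard
  push_cast at hcard
  linarith

theorem exists_ncard_le_ncard_edgeSet_induce_starContraction [Finite V] {X : Set V} (S : Set V)
    (hXS : Disjoint X S) (hNX : ∀ u ∈ S, G.neighborSet u ⊆ X)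
    (hdeg : ∀ u ∈ S, 2 * grad G 1 < ((G.neighborSet u).ncard : ℝ)) :
    ∃ f : V → V, (∀ v ∈ S, G.Adj v (f v)) ∧
      S.ncard ≤ ((starContraction G S f).induce X).edgeSet.ncard := by
  classical
  induction S, S.toFinite using Set.Finite.induction_on with
  | empty => exact ⟨id, by simp, by simp⟩
  | @insert u S hu hS ih =>
    have hXS' : Disjoint X S := hXS.mono_right (Set.subset_insert _ _)
    obtain ⟨f, hf, hcard⟩ :=
      ih hXS' (fun v hv => hNX v (Or.inr hv)) (fun v hv => hdeg v (Or.inr hv))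
    have hNuX := hNX u (Set.mem_insert _ _)
    obtain ⟨a, ha, b, hb, hab, hnadj⟩ :=
      exists_not_adj_starContraction hf hu (hXS'.mono_left hNuX) (hdeg u (Set.mem_insert _ _))
    refine ⟨Function.update f u a, ?_, ?_⟩
    · rintro v (rfl | hv)
      · rwa [Function.update_self]
      · rw [Function.update_of_ne (ne_of_mem_of_not_mem hv hu)]
        exact hf v hv
    · have hlt : ((starContraction G S f).induce X).edgeSet ⊂
          ((starContraction G (insert u S) (Function.update f u a)).induce X).edgeSet :=
        (Set.ssubset_iff_of_subset
          (edgeSet_mono (comap_monotone _ (starContraction_le_insert_update hu a)))).mpr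
          ⟨s(⟨a, hNuX ha⟩, ⟨b, hNuX hb⟩), starContraction_insert_update_adj hab hb, hnadj⟩
      rw [Set.ncard_insert_of_notMem hu hS]
      exact hcard.trans_lt (Set.ncard_lt_ncard hlt)

end StarContraction

end

theorem bipartite_few_high_degree_vertices_general
    {V : Type*} [Fintype V] (G : SimpleGraph V) (X Y : Set V)
    (hdisj : Disjoint X Y)
    (hbip : ∀ u v, G.Adj u v → (u ∈ X ∧ v ∈ Y) ∨ (u ∈ Y ∧ v ∈ X)) :
    (({u ∈ Y | 2 * grad G 1 < ((G.neighborSet u).ncard : ℝ)}.ncard : ℝ)) ≤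
      2 * grad G 1 * (X.ncard : ℝ) := by
  set D := {u ∈ Y | 2 * grad G 1 < ((G.neighborSet u).ncard : ℝ)}
  have hXD : Disjoint X D := hdisj.mono_right (Set.sep_subset _ _)
  have hNX : ∀ u ∈ D, G.neighborSet u ⊆ X := by
    rintro u ⟨huY, -⟩ v huv
    rcases hbip u v huv with ⟨huX, -⟩ | ⟨-, hvX⟩
    · exact absurd huY (Set.disjoint_left.mp hdisj huX)
    · exact hvX
  obtain ⟨f, hf, hcard⟩ :=
    exists_ncard_le_ncard_edgeSet_induce_starContraction D hXD hNX fun u hu => hu.2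
  have hminor := isShallowMinorAtDepth_one_induce_starContraction hf hXD
  calc (D.ncard : ℝ) ≤ ((starContraction G D f).induce X).edgeSet.ncard := by exact_mod_cast hcard
    _ ≤ grad G 1 * X.ncard := by simpa [Nat.card_coe_set_eq] using hminor.edgeSet_ncard_le
    _ ≤ 2 * grad G 1 * X.ncard := by
      have := grad_nonneg G 1
      gcongr
      linarith

/-- In a finite bipartite graph with parts `X` and `Y`, the number of vertices of `Y`
of degree greater than `2∇₁(G)` is at most `2∇₁(G)·|X|`. -/
theorem bipartite_few_high_degree_vertices
    {V : Type*} [Fintype V] (G : SimpleGraph V) (X Y : Set V)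
    (hunion : X ∪ Y = Set.univ) (hdisj : Disjoint X Y)
    (hbip : ∀ u v, G.Adj u v → (u ∈ X ∧ v ∈ Y) ∨ (u ∈ Y ∧ v ∈ X)) :
    (({u ∈ Y | 2 * grad G 1 < ((G.neighborSet u).ncard : ℝ)}.ncard : ℝ)) ≤
      2 * grad G 1 * (X.ncard : ℝ) :=
  bipartite_few_high_degree_vertices_general G X Y hdisj hbip
end

section
/- Let G be a finite simple bipartite graph whose vertex set is partitioned into parts X and Y (every edge of G has one endpoint in X and one endpoint in Y), and let 𝓗 = (G∇1)_{≤|X|} be the set of shallow minors of G at depth 1 having at most |X| vertices. Then the number of distinct nonempty subsets X' ⊆ X such that X' = N(u) for some u ∈ Y is at most (clique-grad₀(𝓗) + 2∇₀(𝓗))·|X|. -/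
/-- `∇₀((G∇d)_{≤ℓ})`: the supremum of `|E(H)|/|V(H)|` over nonempty shallow minors of
`G` at depth `d` having at most `ℓ` vertices. -/
noncomputable def nabla0Minors {V : Type*} (G : SimpleGraph V) (d ℓ : ℕ) : ℝ :=
  sSup { q : ℝ | ∃ (n : ℕ) (H : SimpleGraph (Fin n)), 0 < n ∧ n ≤ ℓ ∧
    IsShallowMinorAtDepth G d H ∧ q = (H.edgeSet.ncard : ℝ) / (n : ℝ) }

/-- `#ω(H)`: the number of nonempty cliques of `H`. -/
noncomputable def numCliques {W : Type*} (H : SimpleGraph W) : ℕ :=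
  {s : Finset W | s.Nonempty ∧ H.IsClique (s : Set W)}.ncard

/-- `clique-grad₀((G∇d)_{≤ℓ})`: the supremum of `#ω(H)/|V(H)|` over nonempty shallow
minors of `G` at depth `d` having at most `ℓ` vertices. -/
noncomputable def cliqueGrad0Minors {V : Type*} (G : SimpleGraph V) (d ℓ : ℕ) : ℝ :=
  sSup { q : ℝ | ∃ (n : ℕ) (H : SimpleGraph (Fin n)), 0 < n ∧ n ≤ ℓ ∧
    IsShallowMinorAtDepth G d H ∧ q = (numCliques H : ℝ) / (n : ℝ) }

/-!
Enumerate `X` and grow a depth-1 minor `H` on the vertex set `X` greedily, processing the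
distinct nonempty neighbourhoods `N(u)`, `u ∈ Y`, one at a time. If `N(u)` is already a clique
of `H`, it is charged to that clique; otherwise two non-adjacent `a, b ∈ N(u)` exist, and
contracting `u` into the branch set of `a` adds at least the edge `ab` to `H`. Hence the number
of neighbourhoods is at most `#ω(H) + |E(H)| ≤ (clique-grad₀(𝓗) + ∇₀(𝓗))·|X|`. Bipartiteness
makes the branch sets (stars centred in `X` with leaves in `Y`) pairwise disjoint, and makes the
contracted graph exactly the union of the stars joining `a` to `N(u)` over the contractions
`u ↦ a` performed.
-/

open Set Function

section StarUnion

variable {α ι : Type*}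

-- In the application, `(a, u) ∈ P` records that `u ∈ Y` was contracted into the branch set of
-- `a ∈ X`, and `T u = N(u)`.
def starUnionGraph (T : ι → Set α) (P : Set (α × ι)) : SimpleGraph α :=
  SimpleGraph.fromRel fun a b => ∃ i, (a, i) ∈ P ∧ b ∈ T i

theorem starUnionGraph_mono (T : ι → Set α) {P Q : Set (α × ι)} (h : P ⊆ Q) :
    starUnionGraph T P ≤ starUnionGraph T Q := by
  rintro a b ⟨hab, ⟨i, hi, hb⟩ | ⟨i, hi, ha⟩⟩
  exacts [⟨hab, .inl ⟨i, h hi, hb⟩⟩, ⟨hab, .inr ⟨i, h hi, ha⟩⟩]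

theorem exists_mem_starUnionGraph_lt_insert {T : ι → Set α} {P : Set (α × ι)} {i : ι}
    (h : ¬(starUnionGraph T P).IsClique (T i)) :
    ∃ a ∈ T i, starUnionGraph T P < starUnionGraph T (insert (a, i) P) := by
  obtain ⟨a, ha, b, hb, hab, hnadj⟩ : ∃ a ∈ T i, ∃ b ∈ T i, a ≠ b ∧
      ¬(starUnionGraph T P).Adj a b := by
    simpa [SimpleGraph.IsClique, Set.Pairwise] using h
  refine ⟨a, ha, lt_of_le_of_ne (starUnionGraph_mono T (subset_insert _ _)) fun hPQ => ?_⟩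
  exact hnadj (hPQ ▸ ⟨hab, .inl ⟨i, mem_insert _ _, hb⟩⟩)

theorem exists_ncard_le_ncard_sep_isClique_add_ncard_edgeSet [Finite α] (T : ι → Set α)
    {U : Set ι} (hU : U.Finite) :
    ∃ P : Set (α × ι), (∀ p ∈ P, p.1 ∈ T p.2 ∧ p.2 ∈ U) ∧ InjOn Prod.snd P ∧
      U.ncard ≤ {i ∈ U | (starUnionGraph T P).IsClique (T i)}.ncard +
        (starUnionGraph T P).edgeSet.ncard := by
  induction U, hU using Set.Finite.induction_on with
  | empty => exact ⟨∅, by simp, injOn_empty _, by simp⟩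
  | @insert i₀ U hi₀ hU ih =>
    obtain ⟨P, hPT, hPinj, hcount⟩ := ih
    have hUcard : (insert i₀ U).ncard = U.ncard + 1 := ncard_insert_of_notMem hi₀ hU
    by_cases hclique : (starUnionGraph T P).IsClique (T i₀)
    · refine ⟨P, fun p hp => ⟨(hPT p hp).1, .inr (hPT p hp).2⟩, hPinj, ?_⟩
      have hsep : {i ∈ insert i₀ U | (starUnionGraph T P).IsClique (T i)} =
          insert i₀ {i ∈ U | (starUnionGraph T P).IsClique (T i)} := by
        ext i
        by_cases h : i = i₀ <;> simp [h, hclique]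
      rw [hsep, ncard_insert_of_notMem (fun h => hi₀ h.1) (hU.subset (sep_subset _ _))]
      omega
    · obtain ⟨a, ha, hlt⟩ := exists_mem_starUnionGraph_lt_insert hclique
      set Q := insert (a, i₀) P
      refine ⟨Q, ?_, ?_, ?_⟩
      · rintro p (rfl | hp)
        exacts [⟨ha, mem_insert _ _⟩, ⟨(hPT p hp).1, .inr (hPT p hp).2⟩]
      · refine (injOn_insert fun h => hi₀ (hPT _ h).2).2 ⟨hPinj, ?_⟩
        rintro ⟨p, hp, rfl⟩
        exact hi₀ (hPT p hp).2
      · have hedges := ncard_lt_ncard (SimpleGraph.edgeSet_strict_mono hlt) (toFinite _)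
        have hcliques : {i ∈ U | (starUnionGraph T P).IsClique (T i)}.ncard ≤
            {i ∈ insert i₀ U | (starUnionGraph T Q).IsClique (T i)}.ncard :=
          ncard_le_ncard (fun i ⟨hi, hc⟩ => ⟨.inr hi, hc.mono hlt.le⟩)
            ((hU.insert i₀).subset (sep_subset _ _))
        omega

theorem ncard_sep_isClique_le_numCliques [Finite α] (H : SimpleGraph α) {T : ι → Set α}
    {U : Set ι} (hT : InjOn T U) (hne : ∀ i ∈ U, (T i).Nonempty) :
    {i ∈ U | H.IsClique (T i)}.ncard ≤ numCliques H :=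
  ncard_le_ncard_of_injOn (fun i => (toFinite (T i)).toFinset)
    (fun i ⟨hi, hc⟩ => by simpa using And.intro (hne i hi) hc)
    (fun i hi j hj h => hT hi.1 hj.1 (by simpa using h))

end StarUnion

section ShallowMinor

variable {α V W : Type*}

def SimpleGraph.contract (G : SimpleGraph V) (B : W → Set V) : SimpleGraph W :=
  SimpleGraph.fromRel fun w₁ w₂ => ∃ v₁ ∈ B w₁, ∃ v₂ ∈ B w₂, G.Adj v₁ v₂

theorem isShallowMinorAtDepth_contract {G : SimpleGraph V} {d : ℕ} {B : W → Set V}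
    (hne : ∀ w, (B w).Nonempty) (hdisj : Pairwise (Disjoint on B))
    (hrad : ∀ w, ∃ c : B w, ∀ v : B w, ∃ p : (G.induce (B w)).Walk c v, p.length ≤ d) :
    IsShallowMinorAtDepth G d (G.contract B) := by
  refine ⟨B, hne, fun _ _ h => hdisj h, hrad, fun w₁ w₂ h => ?_⟩
  simp only [SimpleGraph.contract, SimpleGraph.fromRel_adj, ne_eq, h, not_false_eq_true,
    true_and, or_iff_left_iff_imp]
  rintro ⟨v₂, hv₂, v₁, hv₁, hadj⟩
  exact ⟨v₁, hv₁, v₂, hv₂, hadj.symm⟩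

theorem exists_walk_length_le_one_of_forall_adj {G : SimpleGraph V} {c : V} {S : Set V}
    (hS : ∀ v ∈ S, G.Adj c v) :
    ∃ c' : ↥(insert c S), ∀ v : ↥(insert c S),
      ∃ p : (G.induce (insert c S)).Walk c' v, p.length ≤ 1 := by
  refine ⟨⟨c, mem_insert _ _⟩, ?_⟩
  rintro ⟨v, rfl | hv⟩
  · exact ⟨.nil, zero_le_one⟩
  · exact ⟨SimpleGraph.Adj.toWalk (G := G.induce _) (hS v hv), le_rfl⟩

variable {G : SimpleGraph V} {X Y : Set V}

theorem isShallowMinorAtDepth_one_starUnionGraph (hG : G.IsBipartiteWith X Y) {f : α → V}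
    (hf : Injective f) (hfX : ∀ a, f a ∈ X) {P : Set (α × V)}
    (hP : ∀ p ∈ P, G.Adj p.2 (f p.1) ∧ p.2 ∈ Y) (hPinj : InjOn Prod.snd P) :
    IsShallowMinorAtDepth G 1 (starUnionGraph (fun y => f ⁻¹' G.neighborSet y) P) := by
  have hXY : ∀ {v}, v ∈ X → v ∉ Y := fun hv => disjoint_left.mp hG.disjoint hv
  set B : α → Set V := fun a => insert (f a) {y | (a, y) ∈ P}
  have hB : ∀ a b, (∃ v₁ ∈ B a, ∃ v₂ ∈ B b, G.Adj v₁ v₂) ↔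
      (∃ y, (a, y) ∈ P ∧ G.Adj y (f b)) ∨ (∃ y, (b, y) ∈ P ∧ G.Adj y (f a)) := by
    refine fun a b => ⟨?_, ?_⟩
    · rintro ⟨v₁, rfl | hv₁, v₂, rfl | hv₂, hadj⟩
      · exact (hXY (hfX b) (hG.mem_of_mem_adj (hfX a) hadj)).elim
      · exact .inr ⟨v₂, hv₂, hadj.symm⟩
      · exact .inl ⟨v₁, hv₁, hadj⟩
      · exact (hXY (hG.mem_of_mem_adj' (hP _ hv₂).2 hadj) (hP _ hv₁).2).elim
    · rintro (⟨y, hy, hadj⟩ | ⟨y, hy, hadj⟩)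
      exacts [⟨y, .inr hy, f b, mem_insert _ _, hadj⟩,
        ⟨f a, mem_insert _ _, y, .inr hy, hadj.symm⟩]
  have hcontract : G.contract B = starUnionGraph (fun y => f ⁻¹' G.neighborSet y) P := by
    ext a b
    simp only [SimpleGraph.contract, starUnionGraph, SimpleGraph.fromRel_adj, hB]
    exact and_congr_right fun _ => ⟨fun h => h.elim id Or.symm, Or.inl⟩
  rw [← hcontract]
  refine isShallowMinorAtDepth_contract (fun a => insert_nonempty _ _) ?_
    fun a => exists_walk_length_le_one_of_forall_adj fun y hy => (hP _ hy).1.symm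
  intro a b hab
  refine disjoint_left.mpr ?_
  rintro v (rfl | hva) (hvb | hvb)
  · exact hab (hf hvb)
  · exact hXY (hfX a) (hP _ hvb).2
  · exact hXY (hvb ▸ hfX b) (hP _ hva).2
  · exact hab (congrArg Prod.fst (hPinj hva hvb rfl))

theorem exists_injOn_neighborSet_ncard_le [Finite V] (G : SimpleGraph V) (Y : Set V) :
    ∃ U ⊆ Y, (∀ y ∈ U, (G.neighborSet y).Nonempty) ∧ InjOn G.neighborSet U ∧
      {S : Set V | S.Nonempty ∧ ∃ u ∈ Y, S = G.neighborSet u}.ncard ≤ U.ncard := by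
  obtain ⟨U, hUY, hUbij⟩ :=
    exists_subset_bijOn {y ∈ Y | (G.neighborSet y).Nonempty} G.neighborSet
  refine ⟨U, fun y hy => (hUY hy).1, fun y hy => (hUY hy).2, hUbij.injOn, ?_⟩
  calc _ ≤ (G.neighborSet '' U).ncard := by
        rw [hUbij.image_eq]
        exact ncard_le_ncard fun _ ⟨hne, u, hu, h⟩ => ⟨u, ⟨hu, h ▸ hne⟩, h.symm⟩
    _ ≤ U.ncard := ncard_image_le (toFinite U)

theorem exists_isShallowMinorAtDepth_one_ncard_le_numCliques_add_ncard_edgeSet [Finite α]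
    (hG : G.IsBipartiteWith X Y) {f : α → V} (hf : Injective f) (hrange : range f = X)
    {U : Set V} (hU : U.Finite) (hUY : U ⊆ Y) (hUne : ∀ y ∈ U, (G.neighborSet y).Nonempty)
    (hUinj : InjOn G.neighborSet U) :
    ∃ H : SimpleGraph α, IsShallowMinorAtDepth G 1 H ∧
      U.ncard ≤ numCliques H + H.edgeSet.ncard := by
  have hNf : ∀ y ∈ U, G.neighborSet y ⊆ range f := fun y hy => by
    rw [hrange]; exact SimpleGraph.isBipartiteWith_neighborSet_subset' hG (hUY hy)
  set T : V → Set α := fun y => f ⁻¹' G.neighborSet y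
  have hTinj : InjOn T U := fun y hy y' hy' h => hUinj hy hy' <| by
    rw [← image_preimage_eq_of_subset (hNf y hy), ← image_preimage_eq_of_subset (hNf y' hy')]
    exact congrArg (f '' ·) h
  have hTne : ∀ y ∈ U, (T y).Nonempty := fun y hy => by
    obtain ⟨v, hv⟩ := hUne y hy
    obtain ⟨a, rfl⟩ := hNf y hy hv
    exact ⟨a, hv⟩
  obtain ⟨P, hP, hPinj, hcount⟩ := exists_ncard_le_ncard_sep_isClique_add_ncard_edgeSet T hU
  refine ⟨starUnionGraph T P, ?_, ?_⟩
  · exact isShallowMinorAtDepth_one_starUnionGraph hG hf (fun a => hrange ▸ mem_range_self a)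
      (fun p hp => ⟨(hP p hp).1, hUY (hP p hp).2⟩) hPinj
  · have := ncard_sep_isClique_le_numCliques (starUnionGraph T P) hTinj hTne
    omega

end ShallowMinor

theorem bddAbove_setOf_exists_graph_fin_le (Q : ∀ n, SimpleGraph (Fin n) → Prop)
    (F : ∀ n, SimpleGraph (Fin n) → ℝ) (ℓ : ℕ) :
    BddAbove {q : ℝ | ∃ (n : ℕ) (H : SimpleGraph (Fin n)), 0 < n ∧ n ≤ ℓ ∧ Q n H ∧ q = F n H} := by
  refine (Set.finite_range fun x : Σ n : Fin (ℓ + 1), SimpleGraph (Fin n) => F x.1 x.2).subset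
    ?_ |>.bddAbove
  rintro q ⟨n, H, -, hnℓ, -, rfl⟩
  exact ⟨⟨⟨n, Nat.lt_succ_of_le hnℓ⟩, H⟩, rfl⟩

section MinorDensities

variable {V : Type*} {G : SimpleGraph V} {d ℓ n : ℕ} {H : SimpleGraph (Fin n)}

theorem ncard_edgeSet_le_nabla0Minors_mul (hH : IsShallowMinorAtDepth G d H) (hn : 0 < n)
    (hnℓ : n ≤ ℓ) : (H.edgeSet.ncard : ℝ) ≤ nabla0Minors G d ℓ * n := by
  rw [← div_le_iff₀ (by positivity)]
  exact le_csSup (bddAbove_setOf_exists_graph_fin_le _ (fun n H => (H.edgeSet.ncard : ℝ) / n) ℓ)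
    ⟨n, H, hn, hnℓ, hH, rfl⟩

theorem numCliques_le_cliqueGrad0Minors_mul (hH : IsShallowMinorAtDepth G d H) (hn : 0 < n)
    (hnℓ : n ≤ ℓ) : (numCliques H : ℝ) ≤ cliqueGrad0Minors G d ℓ * n := by
  rw [← div_le_iff₀ (by positivity)]
  exact le_csSup (bddAbove_setOf_exists_graph_fin_le _ (fun n H => (numCliques H : ℝ) / n) ℓ)
    ⟨n, H, hn, hnℓ, hH, rfl⟩

end MinorDensities

theorem bipartite_few_neighborhood_subsets_general_general
    {V : Type*} [Fintype V] (G : SimpleGraph V) (X Y : Set V)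
    (hdisj : Disjoint X Y)
    (hbip : ∀ u v, G.Adj u v → (u ∈ X ∧ v ∈ Y) ∨ (u ∈ Y ∧ v ∈ X)) :
    (({X' : Set V | X'.Nonempty ∧ X' ⊆ X ∧ ∃ u ∈ Y, X' = G.neighborSet u}.ncard : ℝ)) ≤
      (cliqueGrad0Minors G 1 X.ncard + 2 * nabla0Minors G 1 X.ncard) * (X.ncard : ℝ) := by
  rcases Nat.eq_zero_or_pos X.ncard with hX | hX
  · obtain rfl := (ncard_eq_zero (toFinite X)).mp hX
    have hempty : {X' : Set V | X'.Nonempty ∧ X' ⊆ ∅ ∧ ∃ u ∈ Y, X' = G.neighborSet u} = ∅ :=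
      eq_empty_of_forall_notMem fun X' h => h.1.ne_empty (subset_empty_iff.mp h.2.1)
    rw [hempty, ncard_empty, Nat.cast_zero, ncard_empty, Nat.cast_zero, mul_zero]
  obtain ⟨f, hf, hrange⟩ : ∃ f : Fin X.ncard → V, Injective f ∧ range f = X :=
    ⟨_, Subtype.val_injective.comp (Finite.equivFin X).symm.injective,
      ((Finite.equivFin X).symm.surjective.range_comp _).trans Subtype.range_coe⟩
  obtain ⟨U, hUY, hUne, hUinj, hN⟩ := exists_injOn_neighborSet_ncard_le G Y
  obtain ⟨H, hH, hcount⟩ := exists_isShallowMinorAtDepth_one_ncard_le_numCliques_add_ncard_edgeSet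
    ⟨hdisj, hbip⟩ hf hrange (toFinite U) hUY hUne hUinj
  have hcliques := numCliques_le_cliqueGrad0Minors_mul hH hX le_rfl
  have hedges := ncard_edgeSet_le_nabla0Minors_mul hH hX le_rfl
  have hedges_nonneg : (0 : ℝ) ≤ H.edgeSet.ncard := Nat.cast_nonneg _
  calc _ ≤ (U.ncard : ℝ) := Nat.cast_le.mpr (hN.trans' (ncard_le_ncard fun _ h => ⟨h.1, h.2.2⟩))
    _ ≤ numCliques H + H.edgeSet.ncard := by exact_mod_cast hcount
    _ ≤ _ := by linarith

/-- In a finite bipartite graph with parts `X` and `Y`, with `𝓗 = (G∇1)_{≤|X|}`, the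
number of distinct nonempty subsets `X' ⊆ X` that are the neighborhood of some vertex
of `Y` is at most `(clique-grad₀(𝓗) + 2∇₀(𝓗))·|X|`. -/
theorem bipartite_few_neighborhood_subsets_general
    {V : Type*} [Fintype V] (G : SimpleGraph V) (X Y : Set V)
    (hunion : X ∪ Y = Set.univ) (hdisj : Disjoint X Y)
    (hbip : ∀ u v, G.Adj u v → (u ∈ X ∧ v ∈ Y) ∨ (u ∈ Y ∧ v ∈ X)) :
    (({X' : Set V | X'.Nonempty ∧ X' ⊆ X ∧ ∃ u ∈ Y, X' = G.neighborSet u}.ncard : ℝ)) ≤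
      (cliqueGrad0Minors G 1 X.ncard + 2 * nabla0Minors G 1 X.ncard) * (X.ncard : ℝ) :=
  bipartite_few_neighborhood_subsets_general_general G X Y hdisj hbip
end

section
/- Let G be a finite simple graph, S ⊆ V(G), δ ∈ ℕ, and let 𝓗_S = (G∇(δ+1))_{≤|S|} be the set of shallow minors of G at depth δ+1 having at most |S| vertices. Let C₁,…,C_s be pairwise vertex-disjoint connected subgraphs of G − S such that for each 1 ≤ i ≤ s the induced subgraph G[V(Cᵢ)] is connected with diameter at most δ and |N_S(Cᵢ)| > ω(𝓗_S). Then s ≤ 2∇₀(𝓗_S)·|S|. -/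
/-- `ω((G∇d)_{≤ℓ})`: the supremum of clique sizes over shallow minors of `G` at
depth `d` having at most `ℓ` vertices. -/
noncomputable def omegaMinors {V : Type*} (G : SimpleGraph V) (d ℓ : ℕ) : ℕ :=
  sSup { m : ℕ | ∃ (n : ℕ) (H : SimpleGraph (Fin n)), n ≤ ℓ ∧
    IsShallowMinorAtDepth G d H ∧ ∃ s : Finset (Fin n), H.IsNClique m s }

/-- `N_S(C)`: vertices of `S` having at least one neighbor in `C`. -/
def nbrIn {V : Type*} (G : SimpleGraph V) (S C : Set V) : Set V :=
  {v ∈ S | ∃ u ∈ C, G.Adj v u}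

/-!
Process the components one at a time, contracting each `Cᵢ` into a chosen vertex of `N_S(Cᵢ)`.
Every branch set is then a vertex of `S` together with some components adjacent to it, so it has
radius at most `δ + 1`, and the contracted graph is a shallow minor on the vertex set `S`. When
`Cᵢ` is added, `N_S(Cᵢ)` is too large to be a clique of the current minor, so it contains two
nonadjacent vertices `w₁, w₂`; contracting `Cᵢ` into `w₂` creates the new edge `w₁w₂`. After all
`s` steps the minor has at least `s` edges, hence `s ≤ ∇₀(𝓗_S)·|S|`.
-/

section

variable {V W W' : Type*}

namespace SimpleGraph

def contract_s7 (G : SimpleGraph V) (B : W → Set V) : SimpleGraph W where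
  Adj w₁ w₂ := w₁ ≠ w₂ ∧ ∃ v₁ ∈ B w₁, ∃ v₂ ∈ B w₂, G.Adj v₁ v₂
  symm := ⟨fun _ _ ⟨hne, v₁, h₁, v₂, h₂, h⟩ => ⟨hne.symm, v₂, h₂, v₁, h₁, h.symm⟩⟩
  loopless := ⟨fun _ h => h.1 rfl⟩

@[simp]
theorem contract_adj {G : SimpleGraph V} {B : W → Set V} {w₁ w₂ : W} :
    (G.contract_s7 B).Adj w₁ w₂ ↔ w₁ ≠ w₂ ∧ ∃ v₁ ∈ B w₁, ∃ v₂ ∈ B w₂, G.Adj v₁ v₂ :=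
  Iff.rfl

theorem contract_mono (G : SimpleGraph V) {B B' : W → Set V} (h : ∀ w, B w ⊆ B' w) :
    G.contract_s7 B ≤ G.contract_s7 B' :=
  fun _ _ ⟨hne, v₁, h₁, v₂, h₂, hadj⟩ => ⟨hne, v₁, h _ h₁, v₂, h _ h₂, hadj⟩

theorem isShallowMinorAtDepth_contract {G : SimpleGraph V} {d : ℕ} {B : W → Set V}
    (hne : ∀ w, (B w).Nonempty) (hdisj : Pairwise fun w₁ w₂ => Disjoint (B w₁) (B w₂))
    (hrad : ∀ w, ∃ c : B w, ∀ u : B w, ∃ p : (G.induce (B w)).Walk c u, p.length ≤ d) :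
    IsShallowMinorAtDepth G d (G.contract_s7 B) :=
  ⟨B, hne, fun _ _ h => hdisj h, hrad, fun _ _ hne => ⟨And.right, And.intro hne⟩⟩

theorem exists_walk_length_le_succ_of_adj {G : SimpleGraph V} {A B : Set V} {δ : ℕ}
    (hAB : A ⊆ B) (hdiam : ∀ u v : A, ∃ p : (G.induce A).Walk u v, p.length ≤ δ)
    {c y u : V} (hc : c ∈ B) (hy : y ∈ A) (hcy : G.Adj c y) (hu : u ∈ A) :
    ∃ p : (G.induce B).Walk ⟨c, hc⟩ ⟨u, hAB hu⟩, p.length ≤ δ + 1 := by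
  obtain ⟨p, hp⟩ := hdiam ⟨y, hy⟩ ⟨u, hu⟩
  let f : G.induce A →g G.induce B := ⟨Set.inclusion hAB, id⟩
  refine ⟨.cons (show (G.induce B).Adj ⟨c, hc⟩ ⟨y, hAB hy⟩ from hcy) (p.map f), ?_⟩
  simp only [Walk.length_cons, Walk.length_map]
  omega

end SimpleGraph

open SimpleGraph

theorem IsShallowMinorAtDepth.map_equiv {G : SimpleGraph V} {d : ℕ} {H : SimpleGraph W}
    (h : IsShallowMinorAtDepth G d H) (e : W ≃ W') :
    IsShallowMinorAtDepth G d (H.map e.toEmbedding) := by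
  obtain ⟨ψ, hne, hdisj, hrad, hadj⟩ := h
  refine ⟨ψ ∘ e.symm, fun _ => hne _, fun _ _ h => hdisj _ _ (e.symm.injective.ne h),
    fun _ => hrad _, fun w₁ w₂ h => ?_⟩
  obtain ⟨a, rfl⟩ := e.surjective w₁
  obtain ⟨b, rfl⟩ := e.surjective w₂
  refine (map_adj_apply (f := e.toEmbedding)).trans ?_
  simpa using hadj a b (e.injective.ne_iff.mp h)

section Bounds

variable [Finite W] {G : SimpleGraph V} {d ℓ : ℕ} {H : SimpleGraph W}

theorem ncard_le_omegaMinors (hH : IsShallowMinorAtDepth G d H) (hcard : Nat.card W ≤ ℓ)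
    {T : Set W} (hT : H.IsClique T) : T.ncard ≤ omegaMinors G d ℓ := by
  let e := Finite.equivFin W
  have hTfin := T.toFinite
  refine le_csSup ⟨ℓ, ?_⟩ ⟨Nat.card W, H.map e.toEmbedding, hcard, hH.map_equiv e,
    hTfin.toFinset.map e.toEmbedding, ?_⟩
  · rintro m ⟨n, H', hn, -, t, ht⟩
    calc m = t.card := ht.card_eq.symm
      _ ≤ n := t.card_le_univ.trans_eq (Fintype.card_fin n)
      _ ≤ ℓ := hn
  · exact ((isNClique_iff _).mpr ⟨by simpa using hT,
      (Set.ncard_eq_toFinset_card T hTfin).symm⟩).map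

theorem nabla0Minors_nonneg (G : SimpleGraph V) (d ℓ : ℕ) : 0 ≤ nabla0Minors G d ℓ :=
  Real.sSup_nonneg fun _ ⟨_, _, _, _, _, hq⟩ => hq ▸ by positivity

theorem edgeSet_ncard_le_nabla0Minors_mul (hH : IsShallowMinorAtDepth G d H)
    (hcard : Nat.card W ≤ ℓ) :
    (H.edgeSet.ncard : ℝ) ≤ nabla0Minors G d ℓ * Nat.card W := by
  classical
  rcases isEmpty_or_nonempty W with hW | hW
  · simp [Set.eq_empty_of_isEmpty H.edgeSet]
  let e := Finite.equivFin W
  have hmap : (H.map e.toEmbedding).edgeSet.ncard = H.edgeSet.ncard := by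
    rw [edgeSet_map, Set.ncard_image_of_injective _ e.toEmbedding.sym2Map.injective]
  rw [← div_le_iff₀ (by exact_mod_cast Nat.card_pos)]
  refine le_csSup ⟨ℓ.choose 2, ?_⟩ ⟨Nat.card W, H.map e.toEmbedding, Nat.card_pos, hcard,
    hH.map_equiv e, by rw [hmap]⟩
  rintro q ⟨n, H', hn0, hn, -, rfl⟩
  have hedges : H'.edgeSet.ncard ≤ ℓ.choose 2 := by
    rw [← coe_edgeFinset, Set.ncard_coe_finset]
    calc H'.edgeFinset.card ≤ (Fintype.card (Fin n)).choose 2 := card_edgeFinset_le_card_choose_two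
      _ ≤ ℓ.choose 2 := Nat.choose_le_choose 2 ((Fintype.card_fin n).trans_le hn)
  calc (H'.edgeSet.ncard : ℝ) / n ≤ H'.edgeSet.ncard :=
        div_le_self (by positivity) (by exact_mod_cast hn0)
    _ ≤ ℓ.choose 2 := by exact_mod_cast hedges

end Bounds

section AttachedComponents

variable {G : SimpleGraph V} {S : Set V} {s δ : ℕ} {C : Fin s → Set V}

def attachedBranchSet (C : Fin s → Set V) (I : Finset (Fin s)) (ρ : Fin s → S) (w : S) :
    Set V :=
  {v | v = w ∨ ∃ i ∈ I, ρ i = w ∧ v ∈ C i}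

theorem isShallowMinorAtDepth_contract_attachedBranchSet (hsub : ∀ i, C i ⊆ Sᶜ)
    (hdisj : ∀ i j, i ≠ j → Disjoint (C i) (C j))
    (hdiam : ∀ i, ∀ u v : C i, ∃ p : (G.induce (C i)).Walk u v, p.length ≤ δ)
    (I : Finset (Fin s)) {ρ : Fin s → S} (hρ : ∀ i, ↑(ρ i) ∈ nbrIn G S (C i)) :
    IsShallowMinorAtDepth G (δ + 1) (G.contract_s7 (attachedBranchSet C I ρ)) := by
  refine isShallowMinorAtDepth_contract (fun w => ⟨w, Or.inl rfl⟩) ?_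
    fun w => ⟨⟨w, Or.inl rfl⟩, ?_⟩
  · intro w₁ w₂ hne
    rw [Set.disjoint_left]
    rintro x (rfl | ⟨i, -, rfl, hi⟩) (h | ⟨j, -, rfl, hj⟩)
    · exact hne (Subtype.ext h)
    · exact hsub j hj w₁.2
    · exact hsub i hi (h ▸ w₂.2)
    · obtain rfl | hij := eq_or_ne i j
      · exact hne rfl
      · exact Set.disjoint_left.mp (hdisj i j hij) hi hj
  · rintro ⟨u, rfl | ⟨i, hi, rfl, hu⟩⟩
    · exact ⟨.nil, by simp⟩
    · obtain ⟨-, y, hy, hadj⟩ := hρ i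
      exact exists_walk_length_le_succ_of_adj (fun x hx => Or.inr ⟨i, hi, rfl, hx⟩)
        (hdiam i) _ hy hadj hu

theorem exists_not_adj_of_omegaMinors_lt [Finite V] {d : ℕ} {H : SimpleGraph S}
    (hH : IsShallowMinorAtDepth G d H) {A : Set V} (hA : A ⊆ S)
    (hbig : omegaMinors G d S.ncard < A.ncard) :
    ∃ w₁ w₂ : S, ↑w₁ ∈ A ∧ ↑w₂ ∈ A ∧ w₁ ≠ w₂ ∧ ¬ H.Adj w₁ w₂ := by
  by_contra! hclique
  have hT : H.IsClique (Subtype.val ⁻¹' A) := fun w₁ h₁ w₂ h₂ hne => hclique w₁ w₂ h₁ h₂ hne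
  have hle := ncard_le_omegaMinors hH (Nat.card_coe_set_eq S).le hT
  rw [Set.ncard_preimage_of_injective_subset_range Subtype.val_injective (by simpa using hA)]
    at hle
  omega

theorem exists_edgeSet_ncard_lt_attach [Finite V] (hsub : ∀ i, C i ⊆ Sᶜ)
    (hdisj : ∀ i j, i ≠ j → Disjoint (C i) (C j))
    (hdiam : ∀ i, ∀ u v : C i, ∃ p : (G.induce (C i)).Walk u v, p.length ≤ δ)
    {I : Finset (Fin s)} {i₀ : Fin s} (hi₀ : i₀ ∉ I)
    (hbig : omegaMinors G (δ + 1) S.ncard < (nbrIn G S (C i₀)).ncard)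
    {ρ : Fin s → S} (hρ : ∀ i, ↑(ρ i) ∈ nbrIn G S (C i)) :
    ∃ ρ' : Fin s → S, (∀ i, ↑(ρ' i) ∈ nbrIn G S (C i)) ∧
      (G.contract_s7 (attachedBranchSet C I ρ)).edgeSet.ncard <
        (G.contract_s7 (attachedBranchSet C (insert i₀ I) ρ')).edgeSet.ncard := by
  obtain ⟨w₁, w₂, hw₁, hw₂, hne, hnadj⟩ := exists_not_adj_of_omegaMinors_lt
    (isShallowMinorAtDepth_contract_attachedBranchSet hsub hdisj hdiam I hρ)
    (fun _ hv => hv.1) hbig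
  set ρ' := Function.update ρ i₀ w₂
  have hρ' : ∀ i, ↑(ρ' i) ∈ nbrIn G S (C i) := by
    intro i
    obtain rfl | h := eq_or_ne i i₀
    · simpa [ρ'] using hw₂
    · simpa [ρ', h] using hρ i
  have hle : G.contract_s7 (attachedBranchSet C I ρ) ≤
      G.contract_s7 (attachedBranchSet C (insert i₀ I) ρ') := by
    refine G.contract_mono fun w v => Or.imp_right ?_
    rintro ⟨i, hi, hρi, hv⟩
    refine ⟨i, Finset.mem_insert_of_mem hi, ?_, hv⟩
    simpa [ρ', ne_of_mem_of_not_mem hi hi₀] using hρi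
  have hadj : (G.contract_s7 (attachedBranchSet C (insert i₀ I) ρ')).Adj w₁ w₂ := by
    obtain ⟨-, x, hx, hw₁x⟩ := hw₁
    have hx' : x ∈ attachedBranchSet C (insert i₀ I) ρ' w₂ :=
      Or.inr ⟨i₀, Finset.mem_insert_self _ _, by simp [ρ'], hx⟩
    exact contract_adj.mpr ⟨hne, w₁, Or.inl rfl, x, hx', hw₁x⟩
  refine ⟨ρ', hρ', Set.ncard_lt_ncard ?_ (Set.toFinite _)⟩
  exact edgeSet_ssubset_edgeSet.mpr (lt_of_le_of_ne hle fun h => hnadj (h ▸ hadj))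

theorem exists_card_le_edgeSet_ncard_attach [Finite V] (hsub : ∀ i, C i ⊆ Sᶜ)
    (hdisj : ∀ i j, i ≠ j → Disjoint (C i) (C j))
    (hdiam : ∀ i, ∀ u v : C i, ∃ p : (G.induce (C i)).Walk u v, p.length ≤ δ)
    (hbig : ∀ i, omegaMinors G (δ + 1) S.ncard < (nbrIn G S (C i)).ncard)
    (I : Finset (Fin s)) :
    ∃ ρ : Fin s → S, (∀ i, ↑(ρ i) ∈ nbrIn G S (C i)) ∧
      I.card ≤ (G.contract_s7 (attachedBranchSet C I ρ)).edgeSet.ncard := by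
  induction I using Finset.induction_on with
  | empty =>
    have hne i : (nbrIn G S (C i)).Nonempty :=
      Set.nonempty_of_ncard_ne_zero (Nat.zero_lt_of_lt (hbig i)).ne'
    choose ρ hρ using hne
    exact ⟨fun i => ⟨ρ i, (hρ i).1⟩, hρ, by simp⟩
  | insert i₀ I hi₀ ih =>
    obtain ⟨ρ, hρ, hI⟩ := ih
    obtain ⟨ρ', hρ', hlt⟩ := exists_edgeSet_ncard_lt_attach hsub hdisj hdiam hi₀ (hbig i₀) hρ
    exact ⟨ρ', hρ', by rw [Finset.card_insert_of_notMem hi₀]; omega⟩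

end AttachedComponents

end

theorem few_components_with_large_neighborhood_general_general
    {V : Type*} [Fintype V] (G : SimpleGraph V)
    (S : Set V) (δ : ℕ) (s : ℕ) (C : Fin s → Set V)
    (hsub : ∀ i, C i ⊆ Sᶜ)
    (hdisj : ∀ i j, i ≠ j → Disjoint (C i) (C j))
    (hdiam : ∀ i, ∀ u v : C i,
      ∃ p : (SimpleGraph.induce (C i) G).Walk u v, p.length ≤ δ)
    (hbig : ∀ i, omegaMinors G (δ + 1) S.ncard < (nbrIn G S (C i)).ncard) :
    (s : ℝ) ≤ 2 * nabla0Minors G (δ + 1) S.ncard * (S.ncard : ℝ) := by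
  obtain ⟨ρ, hρ, hs⟩ :=
    exists_card_le_edgeSet_ncard_attach hsub hdisj hdiam hbig Finset.univ
  have hedges := edgeSet_ncard_le_nabla0Minors_mul
    (isShallowMinorAtDepth_contract_attachedBranchSet hsub hdisj hdiam Finset.univ hρ)
    (Nat.card_coe_set_eq S).le
  rw [Nat.card_coe_set_eq] at hedges
  have hnabla := nabla0Minors_nonneg G (δ + 1) S.ncard
  calc (s : ℝ) ≤ (G.contract_s7 (attachedBranchSet C Finset.univ ρ)).edgeSet.ncard := by
        exact_mod_cast (Finset.card_fin s).symm.trans_le hs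
    _ ≤ nabla0Minors G (δ + 1) S.ncard * S.ncard := hedges
    _ ≤ 2 * nabla0Minors G (δ + 1) S.ncard * S.ncard := by
        nlinarith [(Nat.cast_nonneg S.ncard : (0 : ℝ) ≤ S.ncard)]

/-- With `𝓗_S = (G∇(δ+1))_{≤|S|}`: if `C₁,…,C_s` are pairwise disjoint connected
subgraphs of `G − S`, each of diameter at most `δ` and with more than `ω(𝓗_S)`
neighbors in `S`, then `s ≤ 2∇₀(𝓗_S)·|S|`. -/
theorem few_components_with_large_neighborhood_general
    {V : Type*} [Fintype V] (G : SimpleGraph V)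
    (S : Set V) (δ : ℕ) (s : ℕ) (C : Fin s → Set V)
    (hsub : ∀ i, C i ⊆ Sᶜ)
    (hdisj : ∀ i j, i ≠ j → Disjoint (C i) (C j))
    (hconn : ∀ i, (SimpleGraph.induce (C i) G).Connected)
    (hdiam : ∀ i, ∀ u v : C i,
      ∃ p : (SimpleGraph.induce (C i) G).Walk u v, p.length ≤ δ)
    (hbig : ∀ i, omegaMinors G (δ + 1) S.ncard < (nbrIn G S (C i)).ncard) :
    (s : ℝ) ≤ 2 * nabla0Minors G (δ + 1) S.ncard * (S.ncard : ℝ) :=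
  few_components_with_large_neighborhood_general_general G S δ s C hsub hdisj hdiam hbig
end

section
/- Let G be a finite simple graph, S ⊆ V(G), δ > 0, and let 𝓗_S = (G∇(δ+1))_{≤|S|} be the set of shallow minors of G at depth δ+1 having at most |S| vertices. Let 𝒞₁,…,𝒞_t be pairwise disjoint nonempty sets of connected components of G − S such that: every component C in ⋃ᵢ 𝒞ᵢ has diameter at most δ (as an induced subgraph of G) and has at least one neighbor in S, and for all components C, C' ∈ ⋃ᵢ 𝒞ᵢ, C and C' lie in the same set 𝒞ⱼ if and only if N_S(C) = N_S(C'). Then t ≤ (clique-grad₀(𝓗_S) + 2∇₀(𝓗_S))·|S|. -/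
/-- `C` is (the vertex set of) a connected component of `G − S`. -/
def IsCompOf {V : Type*} (G : SimpleGraph V) (S : Set V) (C : Set V) : Prop :=
  C ⊆ Sᶜ ∧ C.Nonempty ∧ (SimpleGraph.induce C G).Connected ∧
    ∀ v ∈ Sᶜ, v ∉ C → ∀ u ∈ C, ¬ G.Adj u v

/-!
Pick one component `Cᵢ` from each class; the sets `Xᵢ = N_S(Cᵢ)` are distinct and nonempty.
Contract the `Cᵢ` one at a time into a vertex `aᵢ ∈ Xᵢ`, which joins `aᵢ` to all of `Xᵢ`.
If `Xᵢ` is already a clique of the graph built so far, `aᵢ` is arbitrary and class `i` is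
charged to the clique `Xᵢ`; otherwise `aᵢ` is taken to be an endpoint of a non-edge inside `Xᵢ`,
and class `i` is charged to that new edge. Since a component of diameter `δ` hangs off its
centre at distance at most `δ + 1`, the result is a shallow minor `H` of depth `δ + 1` on the
vertex set `S`, and `t ≤ #ω(H) + |E(H)|`.
-/

open Function SimpleGraph Set Finset

section Greedy

variable {W : Type*}

def starUnion {ι : Type*} (a : ι → W) (X : ι → Set W) : SimpleGraph W :=
  fromEdgeSet (⋃ i, (fun x => s(a i, x)) '' X i)

lemma starUnion_cons {t : ℕ} (z : W) (a : Fin t → W) (X : Fin (t + 1) → Set W) :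
    starUnion (Fin.cons z a : Fin (t + 1) → W) X =
      starUnion a (Fin.tail X) ⊔ fromEdgeSet ((fun x => s(z, x)) '' X 0) := by
  rw [starUnion, starUnion, ← fromEdgeSet_union]
  ext u v
  simp only [fromEdgeSet_adj, mem_iUnion, mem_union, mem_image, Sym2.eq_iff, Fin.exists_fin_succ,
    Fin.cons_zero, Fin.cons_succ, Fin.tail]
  rw [or_comm]

lemma exists_mem_isClique_or_ncard_edgeSet_lt [Finite W] (H : SimpleGraph W) {Y : Set W}
    (hY : Y.Nonempty) :
    ∃ z ∈ Y, H.IsClique Y ∨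
      H.edgeSet.ncard < (H ⊔ fromEdgeSet ((fun x => s(z, x)) '' Y)).edgeSet.ncard := by
  by_cases hY' : H.IsClique Y
  · exact ⟨_, hY.some_mem, Or.inl hY'⟩
  obtain ⟨z, hz, x, hx, hzx, hnadj⟩ : ∃ z ∈ Y, ∃ x ∈ Y, z ≠ x ∧ ¬H.Adj z x := by
    simpa [IsClique, Set.Pairwise] using hY'
  refine ⟨z, hz, Or.inr (ncard_lt_ncard ?_ (toFinite _))⟩
  rw [ssubset_iff_of_subset (edgeSet_mono le_sup_left)]
  exact ⟨s(z, x), Or.inr ((fromEdgeSet_adj _).2 ⟨mem_image_of_mem _ hx, hzx⟩), hnadj⟩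

open Classical in
lemma exists_starUnion_card_le [Finite W] {t : ℕ} (X : Fin t → Set W)
    (hX : ∀ i, (X i).Nonempty) :
    ∃ a : Fin t → W, (∀ i, a i ∈ X i) ∧
      t ≤ #{i | (starUnion a X).IsClique (X i)} + (starUnion a X).edgeSet.ncard := by
  induction t with
  | zero => exact ⟨Fin.elim0, fun i => i.elim0, Nat.zero_le _⟩
  | succ t ih =>
    obtain ⟨a, ha, hcount⟩ := ih (Fin.tail X) (fun i => hX i.succ)
    obtain ⟨z, hz, hstep⟩ :=
      exists_mem_isClique_or_ncard_edgeSet_lt (starUnion a (Fin.tail X)) (hX 0)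
    have hle : starUnion a (Fin.tail X) ≤ starUnion (Fin.cons z a : Fin (t + 1) → W) X :=
      starUnion_cons z a X ▸ le_sup_left
    refine ⟨Fin.cons z a, Fin.cases hz ha, ?_⟩
    have hcliques : #{i | (starUnion a (Fin.tail X)).IsClique (Fin.tail X i)} ≤
        #{i : Fin t | (starUnion (Fin.cons z a : Fin (t + 1) → W) X).IsClique (X i.succ)} :=
      card_le_card (Finset.monotone_filter_right _ fun i _ h => h.mono hle)
    have hedges := ncard_le_ncard (edgeSet_mono hle)
    rw [Fin.card_filter_univ_succ]
    rcases hstep with hclique | hnew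
    · rw [if_pos (hclique.mono hle)]
      omega
    · rw [← starUnion_cons] at hnew
      split_ifs <;> omega

end Greedy

section Counting

variable {W : Type*}

lemma numCliques_mono [Finite W] {H H' : SimpleGraph W} (h : H ≤ H') :
    numCliques H ≤ numCliques H' :=
  ncard_le_ncard (fun _ hs => ⟨hs.1, hs.2.mono h⟩) (toFinite _)

open Classical in
lemma card_filter_isClique_le_numCliques [Fintype W] {ι : Type*} [Fintype ι] (H : SimpleGraph W)
    {X : ι → Set W} (hX : Function.Injective X) (hne : ∀ i, (X i).Nonempty) :
    #{i | H.IsClique (X i)} ≤ numCliques H := by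
  rw [← ncard_coe_finset]
  refine ncard_le_ncard_of_injOn (fun i => (X i).toFinset) ?_ ?_ (toFinite _)
  · intro i hi
    simp only [coe_filter, Finset.mem_univ, true_and] at hi
    exact ⟨by simpa using hne i, by simpa using hi⟩
  · intro i _ j _ hij
    exact hX (by simpa using hij)

end Counting

section Density

variable {V : Type*} (G : SimpleGraph V) (d ℓ : ℕ)

lemma le_sSup_ratio_of_bounded (g : ∀ n, SimpleGraph (Fin n) → ℕ) (B : ℕ)
    (hB : ∀ n ≤ ℓ, ∀ H, g n H ≤ B) {n : ℕ} (H : SimpleGraph (Fin n)) (hn : 0 < n)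
    (hnℓ : n ≤ ℓ) (hH : IsShallowMinorAtDepth G d H) :
    (g n H : ℝ) / n ≤ sSup { q : ℝ | ∃ (n : ℕ) (H : SimpleGraph (Fin n)), 0 < n ∧ n ≤ ℓ ∧
      IsShallowMinorAtDepth G d H ∧ q = (g n H : ℝ) / (n : ℝ) } := by
  refine le_csSup ⟨B, ?_⟩ ⟨n, H, hn, hnℓ, hH, rfl⟩
  rintro _ ⟨m, H', hm, hmℓ, -, rfl⟩
  calc (g m H' : ℝ) / m ≤ g m H' := div_le_self (Nat.cast_nonneg _) (by exact_mod_cast hm)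
    _ ≤ B := by exact_mod_cast hB m hmℓ H'

lemma numCliques_le_two_pow {n : ℕ} (H : SimpleGraph (Fin n)) : numCliques H ≤ 2 ^ n := by
  simpa [numCliques] using ncard_le_card {s : Finset (Fin n) | s.Nonempty ∧ H.IsClique (s : Set _)}

lemma ncard_edgeSet_le_sq {n : ℕ} (H : SimpleGraph (Fin n)) : H.edgeSet.ncard ≤ n ^ 2 := by
  classical
  rw [ncard_eq_toFinset_card', ← edgeFinset]
  exact card_edgeFinset_le_card_choose_two.trans ((Fintype.card_fin n).symm ▸ Nat.choose_le_pow n 2)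

lemma numCliques_add_two_mul_ncard_edgeSet_le {n : ℕ} (H : SimpleGraph (Fin n)) (hnℓ : n ≤ ℓ)
    (hH : IsShallowMinorAtDepth G d H) :
    (numCliques H : ℝ) + 2 * H.edgeSet.ncard ≤
      (cliqueGrad0Minors G d ℓ + 2 * nabla0Minors G d ℓ) * n := by
  rcases n.eq_zero_or_pos with rfl | hn
  · have hempty (s : Finset (Fin 0)) : ¬s.Nonempty := fun ⟨x, _⟩ => x.elim0
    simp [numCliques, hempty, eq_empty_of_isEmpty H.edgeSet]
  have hcliques := le_sSup_ratio_of_bounded G d ℓ (fun _ H => numCliques H) (2 ^ ℓ)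
    (fun n hn H => (numCliques_le_two_pow H).trans (Nat.pow_le_pow_right two_pos hn)) H hn hnℓ hH
  have hedges := le_sSup_ratio_of_bounded G d ℓ (fun _ H => H.edgeSet.ncard) (ℓ ^ 2)
    (fun n hn H => (ncard_edgeSet_le_sq H).trans (Nat.pow_le_pow_left hn 2)) H hn hnℓ hH
  have hn' : (0 : ℝ) < n := by exact_mod_cast hn
  rw [div_le_iff₀ hn'] at hcliques hedges
  change _ ≤ cliqueGrad0Minors G d ℓ * n at hcliques
  change _ ≤ nabla0Minors G d ℓ * n at hedges
  linarith

end Density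

section Components

variable {V : Type*} {G : SimpleGraph V} {S C C' : Set V}

lemma IsCompOf.subset_of_mem (h : IsCompOf G S C) (h' : IsCompOf G S C') {v : V} (hv : v ∈ C)
    (hv' : v ∈ C') : C ⊆ C' := by
  obtain ⟨hCS, -, hconn, -⟩ := h
  obtain ⟨-, -, -, hmax⟩ := h'
  suffices hwalk : ∀ (x y : C) (p : (G.induce C).Walk x y), ↑x ∈ C' → ↑y ∈ C' from
    fun u hu => hwalk _ _ (hconn.preconnected ⟨v, hv⟩ ⟨u, hu⟩).some hv'
  intro x y p
  induction p with
  | nil => exact id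
  | cons hadj _ ih =>
    exact fun hx => ih (by_contra fun hm => hmax _ (hCS (Subtype.prop _)) hm _ hx hadj)

lemma IsCompOf.disjoint_of_ne (h : IsCompOf G S C) (h' : IsCompOf G S C') (hne : C ≠ C') :
    Disjoint C C' :=
  disjoint_left.2 fun _ hv hv' =>
    hne ((h.subset_of_mem h' hv hv').antisymm (h'.subset_of_mem h hv' hv))

end Components

section Contraction

variable {V W ι : Type*} (G : SimpleGraph V)

def contractGraph (ψ : W → Set V) : SimpleGraph W :=
  SimpleGraph.fromRel fun k l => ∃ v₁ ∈ ψ k, ∃ v₂ ∈ ψ l, G.Adj v₁ v₂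

lemma isShallowMinorAtDepth_contractGraph {d : ℕ} {ψ : W → Set V} (hne : ∀ w, (ψ w).Nonempty)
    (hdisj : Pairwise (Disjoint on ψ))
    (hrad : ∀ w, ∃ c : ψ w, ∀ u : ψ w, ∃ p : (G.induce (ψ w)).Walk c u, p.length ≤ d) :
    IsShallowMinorAtDepth G d (contractGraph G ψ) := by
  refine ⟨ψ, hne, fun _ _ h => hdisj h, hrad, fun k l hkl => ?_⟩
  simp only [contractGraph, fromRel_adj, ne_eq, hkl, not_false_eq_true, true_and,
    or_iff_left_iff_imp]
  rintro ⟨v₂, hv₂, v₁, hv₁, hadj⟩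
  exact ⟨v₁, hv₁, v₂, hv₂, hadj.symm⟩

def branchSets (f : W → V) (a : ι → W) (C : ι → Set V) (k : W) : Set V :=
  insert (f k) (⋃ (i) (_ : a i = k), C i)

variable {G} {f : W → V} {a : ι → W} {C : ι → Set V}

lemma mem_branchSets {k : W} {v : V} :
    v ∈ branchSets f a C k ↔ v = f k ∨ ∃ i, a i = k ∧ v ∈ C i := by
  simp [branchSets]

lemma self_mem_branchSets (k : W) : f k ∈ branchSets f a C k :=
  mem_insert _ _

lemma mem_branchSets_of_mem {i : ι} {v : V} (hv : v ∈ C i) : v ∈ branchSets f a C (a i) :=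
  mem_branchSets.2 (Or.inr ⟨i, rfl, hv⟩)

lemma pairwise_disjoint_branchSets (hf : f.Injective) (hCf : ∀ i, Disjoint (C i) (range f))
    (hC : Pairwise (Disjoint on C)) : Pairwise (Disjoint on branchSets f a C) := by
  intro k l hkl
  refine disjoint_left.2 fun v hvk hvl => ?_
  rcases mem_branchSets.1 hvk with rfl | ⟨i, rfl, hvi⟩ <;>
    rcases mem_branchSets.1 hvl with hv | ⟨j, rfl, hvj⟩
  · exact hkl (hf hv)
  · exact disjoint_left.1 (hCf j) hvj (mem_range_self k)
  · exact disjoint_left.1 (hCf i) hvi (hv ▸ mem_range_self l)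
  · exact disjoint_left.1 (hC fun hij => hkl (congrArg a hij)) hvi hvj

lemma exists_walk_branchSets_length_le {δ : ℕ} (ha : ∀ i, ∃ u ∈ C i, G.Adj (f (a i)) u)
    (hdiam : ∀ i, ∀ u v : C i, ∃ p : (G.induce (C i)).Walk u v, p.length ≤ δ) (k : W) :
    ∀ v : branchSets f a C k, ∃ p : (G.induce (branchSets f a C k)).Walk
      ⟨f k, self_mem_branchSets _⟩ v, p.length ≤ δ + 1 := by
  rintro ⟨v, hv⟩
  rcases mem_branchSets.1 hv with rfl | ⟨i, rfl, hvi⟩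
  · exact ⟨.nil, by simp⟩
  obtain ⟨u, hui, hadj⟩ := ha i
  obtain ⟨p, hp⟩ := hdiam i ⟨u, hui⟩ ⟨v, hvi⟩
  let e : G.induce (C i) ↪g G.induce (branchSets f a C (a i)) :=
    G.induceHomOfLE fun _ => mem_branchSets_of_mem
  have hadj' : (G.induce (branchSets f a C (a i))).Adj ⟨f (a i), self_mem_branchSets _⟩
      ⟨u, mem_branchSets_of_mem hui⟩ := hadj
  exact ⟨.cons hadj' (p.map e.toHom), Nat.succ_le_succ ((Walk.length_map _ _).trans_le hp)⟩

lemma starUnion_le_contractGraph {X : ι → Set W} (hX : ∀ i, ∀ x ∈ X i, ∃ u ∈ C i, G.Adj (f x) u) :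
    starUnion a X ≤ contractGraph G (branchSets f a C) := by
  intro k l hkl
  simp only [starUnion, fromEdgeSet_adj, mem_iUnion, mem_image, Sym2.eq_iff] at hkl
  obtain ⟨⟨i, x, hx, ⟨rfl, rfl⟩ | ⟨rfl, rfl⟩⟩, hne⟩ := hkl
  all_goals
    obtain ⟨u, hu, hadj⟩ := hX i x hx
    refine (fromRel_adj _ _ _).2 ⟨hne, ?_⟩
  · exact Or.inr ⟨f x, self_mem_branchSets _, u, mem_branchSets_of_mem hu, hadj⟩
  · exact Or.inl ⟨f x, self_mem_branchSets _, u, mem_branchSets_of_mem hu, hadj⟩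

end Contraction

section ManyClassesMinor

variable {V W : Type*} [Fintype W] {G : SimpleGraph V} {δ t : ℕ} {f : W → V} {C : Fin t → Set V}
  {X : Fin t → Set W}

lemma exists_isShallowMinorAtDepth_le_numCliques_add (hf : f.Injective)
    (hC : Pairwise (Disjoint on C)) (hCf : ∀ i, Disjoint (C i) (range f))
    (hdiam : ∀ i, ∀ u v : C i, ∃ p : (G.induce (C i)).Walk u v, p.length ≤ δ)
    (hXC : ∀ i, ∀ x ∈ X i, ∃ u ∈ C i, G.Adj (f x) u) (hXne : ∀ i, (X i).Nonempty)
    (hXinj : X.Injective) :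
    ∃ H : SimpleGraph W, IsShallowMinorAtDepth G (δ + 1) H ∧
      t ≤ numCliques H + 2 * H.edgeSet.ncard := by
  obtain ⟨a, ha, hcount⟩ := exists_starUnion_card_le X hXne
  let H := contractGraph G (branchSets f a C)
  have hle : starUnion a X ≤ H := starUnion_le_contractGraph hXC
  refine ⟨H, isShallowMinorAtDepth_contractGraph G (fun k => ⟨f k, self_mem_branchSets k⟩)
    (pairwise_disjoint_branchSets hf hCf hC)
    fun k => ⟨_, exists_walk_branchSets_length_le (fun i => hXC i _ (ha i)) hdiam k⟩, ?_⟩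
  have := card_filter_isClique_le_numCliques (starUnion a X) hXinj hXne
  have := numCliques_mono hle
  have := ncard_le_ncard (edgeSet_mono hle)
  omega

end ManyClassesMinor

lemma Set.exists_injective_fin_ncard_range_eq {V : Type*} (S : Set V) [Finite S] :
    ∃ f : Fin S.ncard → V, f.Injective ∧ range f = S := by
  let e : Fin S.ncard ≃ S := ((Finite.equivFin S).trans (finCongr (Nat.card_coe_set_eq S))).symm
  exact ⟨Subtype.val ∘ e, Subtype.val_injective.comp e.injective, by simp [range_comp]⟩

theorem few_neighborhood_classes_general_general
    {V : Type*} [Fintype V] (G : SimpleGraph V)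
    (S : Set V) (δ : ℕ) (t : ℕ) (𝒞 : Fin t → Set (Set V))
    (hne : ∀ i, (𝒞 i).Nonempty)
    (hcomp : ∀ i, ∀ C ∈ 𝒞 i, IsCompOf G S C)
    (hdiam : ∀ i, ∀ C ∈ 𝒞 i, ∀ u v : C,
      ∃ p : (SimpleGraph.induce C G).Walk u v, p.length ≤ δ)
    (hnbr : ∀ i, ∀ C ∈ 𝒞 i, (nbrIn G S C).Nonempty)
    (hgroup : ∀ i j, ∀ C ∈ 𝒞 i, ∀ C' ∈ 𝒞 j, (i = j ↔ nbrIn G S C = nbrIn G S C')) :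
    (t : ℝ) ≤ (cliqueGrad0Minors G (δ + 1) S.ncard +
      2 * nabla0Minors G (δ + 1) S.ncard) * (S.ncard : ℝ) := by
  choose C hC using hne
  obtain ⟨f, hf, hrange⟩ := S.exists_injective_fin_ncard_range_eq
  have hnbrS (D : Set V) : nbrIn G S D ⊆ range f := fun _ hv => hrange.ge hv.1
  have hXne i : (f ⁻¹' nbrIn G S (C i)).Nonempty := by
    obtain ⟨x, hx⟩ := hnbr i _ (hC i)
    obtain ⟨k, rfl⟩ := hnbrS _ hx
    exact ⟨k, hx⟩
  have hXinj : Injective fun i => f ⁻¹' nbrIn G S (C i) := fun i j hij =>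
    (hgroup i j _ (hC i) _ (hC j)).2 ((preimage_eq_preimage' (hnbrS _) (hnbrS _)).1 hij)
  have hCdisj : Pairwise (Disjoint on C) := fun i j hij => (hcomp i _ (hC i)).disjoint_of_ne
    (hcomp j _ (hC j)) fun hCij => hij ((hgroup i j _ (hC i) _ (hC j)).2 (by rw [hCij]))
  have hCf i : Disjoint (C i) (range f) := by
    rw [hrange, ← Set.subset_compl_iff_disjoint_right]
    exact (hcomp i _ (hC i)).1
  obtain ⟨H, hminor, hcount⟩ := exists_isShallowMinorAtDepth_le_numCliques_add hf hCdisj hCf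
    (fun i => hdiam i _ (hC i)) (fun i _ hx => hx.2) hXne hXinj
  calc (t : ℝ) ≤ numCliques H + 2 * H.edgeSet.ncard := by exact_mod_cast hcount
    _ ≤ _ := numCliques_add_two_mul_ncard_edgeSet_le G (δ + 1) S.ncard H le_rfl hminor

/-- With `𝓗_S = (G∇(δ+1))_{≤|S|}`: if `𝒞₁,…,𝒞_t` are pairwise disjoint nonempty
classes of connected components of `G − S`, each component of diameter at most `δ`
with a neighbor in `S`, grouped exactly by their neighborhood in `S`, then
`t ≤ (clique-grad₀(𝓗_S) + 2∇₀(𝓗_S))·|S|`. -/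
theorem few_neighborhood_classes_general
    {V : Type*} [Fintype V] (G : SimpleGraph V)
    (S : Set V) (δ : ℕ) (hδ : 0 < δ) (t : ℕ) (𝒞 : Fin t → Set (Set V))
    (hne : ∀ i, (𝒞 i).Nonempty)
    (hdisj : ∀ i j, i ≠ j → Disjoint (𝒞 i) (𝒞 j))
    (hcomp : ∀ i, ∀ C ∈ 𝒞 i, IsCompOf G S C)
    (hdiam : ∀ i, ∀ C ∈ 𝒞 i, ∀ u v : C,
      ∃ p : (SimpleGraph.induce C G).Walk u v, p.length ≤ δ)
    (hnbr : ∀ i, ∀ C ∈ 𝒞 i, (nbrIn G S C).Nonempty)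
    (hgroup : ∀ i j, ∀ C ∈ 𝒞 i, ∀ C' ∈ 𝒞 j, (i = j ↔ nbrIn G S C = nbrIn G S C')) :
    (t : ℝ) ≤ (cliqueGrad0Minors G (δ + 1) S.ncard +
      2 * nabla0Minors G (δ + 1) S.ncard) * (S.ncard : ℝ) :=
  few_neighborhood_classes_general_general G S δ t 𝒞 hne hcomp hdiam hnbr hgroup
end

section
/- For all t, d ∈ ℕ, the Longest Path problem has finite integer index on graphs of treedepth at most d: there exists a finite set 𝓡 of t-boundaried graphs such that every t-boundaried graph G whose underlying graph has treedepth at most d satisfies G ≡_{LP,t} R for some R ∈ 𝓡. -/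
/-- `td(G) ≤ h`: there is a rooted forest on `V(G)` (given by a parent function together
with a consistent depth function) of height at most `h` such that every edge of `G`
joins two vertices in ancestor–descendant relation. -/
def treedepthLE {V : Type*} (G : SimpleGraph V) (h : ℕ) : Prop :=
  ∃ (par : V → V) (dep : V → ℕ),
    (∀ v, (par v = v → dep v = 1) ∧ (par v ≠ v → dep v = dep (par v) + 1)) ∧
    (∀ v, dep v ≤ h) ∧
    (∀ u w, G.Adj u w → (∃ n, par^[n] w = u) ∨ (∃ n, par^[n] u = w))

/-- A `t`-boundaried graph: a finite simple graph with `t` distinguished vertices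
labeled injectively by `1,…,t`. -/
structure BGraph (t : ℕ) : Type 1 where
  V : Type
  fin : Fintype V
  G : SimpleGraph V
  b : Fin t → V
  binj : Function.Injective b

/-- The underlying relation of the glued graph `G₁ ⊕ G₂`: vertices are the vertices of
`G₁` together with the non-boundary vertices of `G₂`; the boundary of `G₂` is
identified label-wise with the boundary of `G₁`. -/
def glueAdj {t : ℕ} (G₁ G₂ : BGraph t) :
    G₁.V ⊕ {v : G₂.V // v ∉ Set.range G₂.b} →
    G₁.V ⊕ {v : G₂.V // v ∉ Set.range G₂.b} → Prop
  | Sum.inl u, Sum.inl v =>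
      G₁.G.Adj u v ∨ ∃ i j, u = G₁.b i ∧ v = G₁.b j ∧ G₂.G.Adj (G₂.b i) (G₂.b j)
  | Sum.inl u, Sum.inr v => ∃ i, u = G₁.b i ∧ G₂.G.Adj (G₂.b i) v.1
  | Sum.inr _, Sum.inl _ => False
  | Sum.inr u, Sum.inr v => G₂.G.Adj u.1 v.1

/-- The glued graph `G₁ ⊕ G₂`. -/
def glue {t : ℕ} (G₁ G₂ : BGraph t) :
    SimpleGraph (G₁.V ⊕ {v : G₂.V // v ∉ Set.range G₂.b}) :=
  SimpleGraph.fromRel (glueAdj G₁ G₂)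

/-- `G` contains a simple path with at least `ℓ` edges. -/
def HasPathGE {W : Type*} (G : SimpleGraph W) (ℓ : ℤ) : Prop :=
  ∃ (u v : W) (p : G.Walk u v), p.IsPath ∧ ℓ ≤ (p.length : ℤ)

/-- Equivalence of `t`-boundaried graphs for the Longest Path problem. -/
def LPEquiv {t : ℕ} (G₁ G₂ : BGraph t) : Prop :=
  ∃ Δ : ℤ, ∀ (H : BGraph t) (ℓ : ℤ),
    HasPathGE (glue G₁ H) ℓ ↔ HasPathGE (glue G₂ H) (ℓ + Δ)

/-! A path of `G ⊕ H` meets `G` in a sequence of runs, i.e. paths of `G` separated by steps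
through `H`. Every run but the first is entered from `H`, so it starts at a boundary vertex, and
these vertices are distinct: there are at most `t + 1` runs. The rest of the path only sees the
end labels of the runs (a boundary label, or none), so if `G₁` and `G₂` admit vertex-disjoint runs
of the same total sizes for every list of at most `t + 1` pairs of end labels, the runs of `G₁` can
be swapped for runs of `G₂`, and `G₁ ≡ G₂` with `Δ = 0`. A path in a graph of treedepth `d` has
fewer than `2 ^ d` vertices (split it at a vertex of minimum depth), so these total sizes are at
most `(t + 1) 2 ^ d`, which leaves only finitely many possible profiles. -/

theorem Set.Finite.exists_finite_transversal {α β : Type*} {S : Set α} {f : α → β}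
    (h : (f '' S).Finite) : ∃ R : Set α, R.Finite ∧ ∀ x ∈ S, ∃ y ∈ R, f x = f y := by
  have := h.to_subtype
  choose g _ hg using fun y : f '' S => y.2
  exact ⟨Set.range g, Set.finite_range g, fun x hx =>
    ⟨_, ⟨⟨f x, x, hx, rfl⟩, rfl⟩, (hg ⟨f x, x, hx, rfl⟩).symm⟩⟩

theorem hasPathGE_iff {W : Type*} {Gr : SimpleGraph W} {ℓ : ℤ} :
    HasPathGE Gr ℓ ↔ ∃ l : List W, l ≠ [] ∧ l.IsChain Gr.Adj ∧ l.Nodup ∧ ℓ < l.length := by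
  constructor
  · rintro ⟨u, v, p, hp, hℓ⟩
    refine ⟨p.support, p.support_ne_nil, p.isChain_adj_support, hp.support_nodup, ?_⟩
    rw [p.length_support]
    omega
  · rintro ⟨l, hne, hc, hnd, hℓ⟩
    refine ⟨_, _, .ofSupport l hne hc, ?_, ?_⟩
    · rw [SimpleGraph.Walk.isPath_def, SimpleGraph.Walk.support_ofSupport]
      exact hnd
    · rw [SimpleGraph.Walk.length_ofSupport]
      have := List.length_pos_of_ne_nil hne
      omega

def OptionAdj {W : Type*} (H : SimpleGraph W) (a b : Option W) : Prop :=
  ∃ x ∈ a, ∃ y ∈ b, H.Adj x y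

section Treedepth

variable {V : Type*} {par : V → V} {dep : V → ℕ}

def IsForestDepth (par : V → V) (dep : V → ℕ) : Prop :=
  ∀ v, (par v = v → dep v = 1) ∧ (par v ≠ v → dep v = dep (par v) + 1)

def IsAncestor (par : V → V) (u x : V) : Prop := ∃ n, par^[n] x = u

def Comparable (par : V → V) (x y : V) : Prop := IsAncestor par x y ∨ IsAncestor par y x

theorem IsAncestor.trans {u v w : V} (huv : IsAncestor par u v) (hvw : IsAncestor par v w) :
    IsAncestor par u w := by
  obtain ⟨m, rfl⟩ := huv
  obtain ⟨n, rfl⟩ := hvw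
  exact ⟨m + n, Function.iterate_add_apply par m n w⟩

namespace IsForestDepth

theorem one_le (hF : IsForestDepth par dep) (v : V) : 1 ≤ dep v := by
  by_cases h : par v = v
  · rw [(hF v).1 h]
  · rw [(hF v).2 h]; omega

theorem dep_iterate_le (hF : IsForestDepth par dep) (n : ℕ) (x : V) :
    dep (par^[n] x) ≤ dep x := by
  induction n generalizing x with
  | zero => rfl
  | succ n ih =>
    rw [Function.iterate_succ_apply]
    refine (ih (par x)).trans ?_
    by_cases h : par x = x
    · rw [h]
    · rw [(hF x).2 h]; omega

theorem dep_iterate_lt (hF : IsForestDepth par dep) {n : ℕ} {x : V} (hx : par^[n] x ≠ x) :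
    dep (par^[n] x) < dep x := by
  cases n with
  | zero => exact absurd rfl hx
  | succ n =>
    rw [Function.iterate_succ_apply] at hx ⊢
    have hpar : par x ≠ x := fun h => hx (by rw [h, Function.iterate_fixed h])
    have := hF.dep_iterate_le n (par x)
    rw [(hF x).2 hpar]; omega

theorem dep_lt_of_isAncestor (hF : IsForestDepth par dep) {u x : V} (h : IsAncestor par u x)
    (hne : u ≠ x) : dep u < dep x := by
  obtain ⟨n, rfl⟩ := h
  exact hF.dep_iterate_lt hne

theorem isAncestor_of_isAncestor_of_isAncestor (hF : IsForestDepth par dep) {u v z : V}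
    (hu : IsAncestor par u z) (hv : IsAncestor par v z) (hle : dep v ≤ dep u) :
    IsAncestor par v u := by
  obtain ⟨a, rfl⟩ := hu
  obtain ⟨b, rfl⟩ := hv
  rcases le_total a b with hab | hba
  · exact ⟨b - a, by rw [← Function.iterate_add_apply, Nat.sub_add_cancel hab]⟩
  · have hvu : par^[a - b] (par^[b] z) = par^[a] z := by
      rw [← Function.iterate_add_apply, Nat.sub_add_cancel hba]
    by_contra hnot
    have := hF.dep_iterate_lt (n := a - b) (x := par^[b] z)
      (fun h => hnot ⟨0, by rw [← hvu, h]; rfl⟩)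
    rw [hvu] at this
    omega

theorem isAncestor_of_comparable (hF : IsForestDepth par dep) {v x y : V}
    (hx : IsAncestor par v x) (hxy : Comparable par x y) (hle : dep v ≤ dep y) :
    IsAncestor par v y :=
  hxy.elim hx.trans fun hyx => hF.isAncestor_of_isAncestor_of_isAncestor hyx hx hle

theorem forall_isAncestor_of_isChain (hF : IsForestDepth par dep) {v : V} :
    ∀ {l : List V}, l.IsChain (Comparable par) → (∀ u ∈ l, dep v ≤ dep u) →
      (∃ w ∈ l, IsAncestor par v w) → ∀ u ∈ l, IsAncestor par v u
  | [], _, _, _ => by simp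
  | x :: l, hc, hmin, ⟨w, hw, hvw⟩ => by
    rw [List.isChain_cons] at hc
    have hl := fun hex => forall_isAncestor_of_isChain hF hc.2
      (fun u hu => hmin u (List.mem_cons_of_mem x hu)) hex
    have hvx : IsAncestor par v x := by
      rcases List.mem_cons.mp hw with rfl | hw
      · exact hvw
      · obtain ⟨y, l', rfl⟩ := List.exists_cons_of_ne_nil (List.ne_nil_of_mem hw)
        exact hF.isAncestor_of_comparable (hl ⟨w, hw, hvw⟩ y (by simp))
          (hc.1 y rfl).symm (hmin x (by simp))
    rintro u (_ | ⟨_, hu⟩)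
    · exact hvx
    · obtain ⟨y, l', rfl⟩ := List.exists_cons_of_ne_nil (List.ne_nil_of_mem hu)
      exact hl ⟨y, by simp, hF.isAncestor_of_comparable hvx (hc.1 y rfl)
        (hmin y (by simp))⟩ u hu

/-- Splitting a chain at a vertex `v` of minimum depth leaves two chains of strict descendants
of `v`, whence the recursion `L(m) ≤ 2 L(m + 1) + 1`. -/
theorem length_lt_two_pow (hF : IsForestDepth par dep) {d : ℕ} (hd : ∀ v, dep v ≤ d)
    (l : List V) (hc : l.IsChain (Comparable par)) (hnd : l.Nodup) (m : ℕ)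
    (hm : ∀ u ∈ l, m ≤ dep u) : l.length < 2 ^ (d + 1 - m) := by
  rcases eq_or_ne l [] with rfl | hne
  · exact Nat.two_pow_pos _
  obtain ⟨v, hvl, hvmin⟩ := Multiset.exists_min_image dep (s := (l : Multiset V))
    (by simpa using hne)
  obtain ⟨l₁, l₂, rfl⟩ := List.append_of_mem hvl
  have hdesc := hF.forall_isAncestor_of_isChain hc hvmin ⟨v, hvl, ⟨0, rfl⟩⟩
  have hdeep : ∀ u ∈ l₁ ++ l₂, dep v + 1 ≤ dep u := by
    intro u hu
    refine hF.dep_lt_of_isAncestor (hdesc u (List.mem_append.mpr ?_)) ?_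
    · rcases List.mem_append.mp hu with hu | hu
      exacts [.inl hu, .inr (List.mem_cons_of_mem v hu)]
    · rintro rfl
      exact (List.nodup_cons.mp (List.nodup_middle.mp hnd)).1 hu
  have h₁ := hF.length_lt_two_pow hd l₁ (List.isChain_append.mp hc).1
    (hnd.sublist (by simp)) (dep v + 1) (fun u hu => hdeep u (by simp [hu]))
  have h₂ := hF.length_lt_two_pow hd l₂ (List.isChain_append.mp hc).2.1.of_cons
    (hnd.sublist (by simp)) (dep v + 1) (fun u hu => hdeep u (by simp [hu]))
  have hmv : m ≤ dep v := hm v hvl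
  have hpow : 2 ^ (d + 1 - (dep v + 1)) * 2 ≤ 2 ^ (d + 1 - m) := by
    rw [← pow_succ]
    exact Nat.pow_le_pow_right two_pos (by have := hd v; omega)
  simp only [List.length_append, List.length_cons]
  omega
termination_by l.length
decreasing_by all_goals (subst_vars; simp only [List.length_append, List.length_cons]; omega)

end IsForestDepth

theorem length_lt_two_pow_of_treedepthLE {G : SimpleGraph V} {d : ℕ} (htd : treedepthLE G d)
    {l : List V} (hc : l.IsChain G.Adj) (hnd : l.Nodup) : l.length < 2 ^ d := by
  obtain ⟨par, dep, hF, hd, hadj⟩ := htd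
  have hF : IsForestDepth par dep := hF
  simpa using hF.length_lt_two_pow hd l (hc.imp hadj) hnd 1 (fun u _ => hF.one_le u)

end Treedepth

namespace BGraph

variable {t : ℕ}

noncomputable def label (G : BGraph t) (v : G.V) : Option (Fin t) := Function.partialInv G.b v

theorem label_eq_some {G : BGraph t} {v : G.V} {i : Fin t} : G.label v = some i ↔ G.b i = v :=
  G.binj.isPartialInv i v

abbrev Inner (H : BGraph t) : Type := {v : H.V // v ∉ Set.range H.b}

/-- The vertex of `H` with which a vertex of `G ⊕ H` is identified, if any. -/
noncomputable def rightVertex {G H : BGraph t} : G.V ⊕ H.Inner → Option H.V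
  | .inl u => (G.label u).map H.b
  | .inr v => some v.1

theorem glue_adj_iff {G H : BGraph t} {x y : G.V ⊕ H.Inner} :
    (glue G H).Adj x y ↔
      (∃ u w, x = .inl u ∧ y = .inl w ∧ G.G.Adj u w) ∨
        OptionAdj H.G (rightVertex x) (rightVertex y) := by
  rcases x with u | v <;> rcases y with w | w
  · simp only [glue, SimpleGraph.fromRel_adj, glueAdj, OptionAdj, rightVertex, Option.mem_def,
      Option.map_eq_some_iff, label_eq_some, Sum.inl.injEq]
    constructor
    · rintro ⟨-, (h | ⟨i, j, rfl, rfl, h⟩) | (h | ⟨i, j, rfl, rfl, h⟩)⟩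
      exacts [.inl ⟨_, _, rfl, rfl, h⟩, .inr ⟨_, ⟨i, rfl, rfl⟩, _, ⟨j, rfl, rfl⟩, h⟩,
        .inl ⟨_, _, rfl, rfl, h.symm⟩, .inr ⟨_, ⟨j, rfl, rfl⟩, _, ⟨i, rfl, rfl⟩, h.symm⟩]
    · rintro (⟨u, w, rfl, rfl, h⟩ | ⟨_, ⟨i, rfl, rfl⟩, _, ⟨j, rfl, rfl⟩, h⟩)
      · exact ⟨fun e => h.ne (Sum.inl_injective e), .inl (.inl h)⟩
      · exact ⟨fun e => h.ne (by rw [G.binj (Sum.inl_injective e)]),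
          .inl (.inr ⟨i, j, rfl, rfl, h⟩)⟩
  · simp [glue, glueAdj, OptionAdj, rightVertex, label_eq_some, eq_comm]
  · simp [glue, glueAdj, OptionAdj, rightVertex, label_eq_some, eq_comm, SimpleGraph.adj_comm]
  · simp only [glue, SimpleGraph.fromRel_adj, glueAdj, OptionAdj, rightVertex, Option.mem_def,
      Option.some.injEq, exists_eq_left', reduceCtorEq, false_and, exists_false, false_or]
    exact ⟨fun ⟨_, h⟩ => h.elim id .symm, fun h => ⟨fun e => h.ne (by cases e; rfl), .inl h⟩⟩

/-- The labels of the two ends of a run in `G`; `none` marks a non-boundary end. -/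
abbrev EndLabels (t : ℕ) : Type := Option (Fin t) × Option (Fin t)

def IsRun (G : BGraph t) (g : List G.V) (e : EndLabels t) : Prop :=
  g.IsChain G.G.Adj ∧ g.head?.map G.label = some e.1 ∧ g.getLast?.map G.label = some e.2

/-- A piece of a path in `G ⊕ H`, seen from `H`: a run through `G` (known only by its end
labels) or a single inner vertex of `H`. -/
abbrev Piece (H : BGraph t) : Type := EndLabels t ⊕ H.Inner

namespace Piece

variable {H : BGraph t}

def entry : Piece H → Option H.V
  | .inl e => e.1.map H.b
  | .inr v => some v.1

def exit : Piece H → Option H.V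
  | .inl e => e.2.map H.b
  | .inr v => some v.1

def Joins (p q : Piece H) : Prop := OptionAdj H.G p.exit q.entry

theorem Joins.isSome_entry {p q : Piece H} (h : p.Joins q) : q.entry.isSome := by
  obtain ⟨-, -, y, hy, -⟩ := h
  exact Option.isSome_iff_exists.mpr ⟨y, hy⟩

end Piece

section Assembly

variable {G H : BGraph t}

theorem IsRun.exists_head {g : List G.V} {e : EndLabels t} (hg : G.IsRun g e) :
    ∃ u, g.head? = some u ∧ G.label u = e.1 :=
  Option.map_eq_some_iff.mp hg.2.1

theorem IsRun.exists_getLast {g : List G.V} {e : EndLabels t} (hg : G.IsRun g e) :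
    ∃ u, g.getLast? = some u ∧ G.label u = e.2 :=
  Option.map_eq_some_iff.mp hg.2.2

theorem IsRun.cons {g : List G.V} {e : EndLabels t} {u w : G.V} (hg : G.IsRun (w :: g) e)
    (huw : G.G.Adj u w) : G.IsRun (u :: w :: g) (G.label u, e.2) :=
  ⟨List.IsChain.cons_cons huw hg.1, rfl, by simpa using hg.2.2⟩

theorem isRun_singleton (u : G.V) : G.IsRun [u] (G.label u, G.label u) :=
  ⟨.singleton u, rfl, rfl⟩

theorem IsRun.isChain_glue {g : List G.V} {e : EndLabels t} (hg : G.IsRun g e) :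
    (g.map (Sum.inl (β := H.Inner))).IsChain (glue G H).Adj :=
  (List.isChain_map _).mpr (hg.1.imp fun _ _ h => glue_adj_iff.mpr (.inl ⟨_, _, rfl, rfl, h⟩))

inductive Assembles (G : BGraph t) {H : BGraph t} :
    List (Piece H) → List (List G.V) → List (G.V ⊕ H.Inner) → Prop
  | nil : Assembles G [] [] []
  | run {e : EndLabels t} {g : List G.V} {P sys l} :
      G.IsRun g e → Assembles G P sys l → Assembles G (.inl e :: P) (g :: sys) (g.map .inl ++ l)
  | inner (v : H.Inner) {P sys l} :
      Assembles G P sys l → Assembles G (.inr v :: P) sys (.inr v :: l)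

namespace Assembles

variable {P : List (Piece H)} {sys : List (List G.V)} {l : List (G.V ⊕ H.Inner)}

theorem perm (h : Assembles G P sys l) :
    l.Perm (sys.flatten.map .inl ++ (P.filterMap Sum.getRight?).map .inr) := by
  induction h with
  | nil => rfl
  | run _ _ ih => simpa [List.filterMap_cons] using ih.append_left _
  | inner v _ ih => simpa [List.filterMap_cons] using ih.cons _ |>.trans List.perm_middle.symm

theorem nodup_iff (h : Assembles G P sys l) :
    l.Nodup ↔ sys.flatten.Nodup ∧ (P.filterMap Sum.getRight?).Nodup := by
  rw [h.perm.nodup_iff, List.nodup_append, List.nodup_map_iff Sum.inl_injective,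
    List.nodup_map_iff Sum.inr_injective]
  simp

theorem length_eq (h : Assembles G P sys l) :
    l.length = sys.flatten.length + (P.filterMap Sum.getRight?).length := by
  simp [h.perm.length_eq, Function.comp_def]

theorem forall₂_isRun (h : Assembles G P sys l) :
    sys.Forall₂ G.IsRun (P.filterMap Sum.getLeft?) := by
  induction h with
  | nil => exact .nil
  | run hg _ ih => exact .cons hg ih
  | inner v _ ih => simpa [List.filterMap_cons] using ih

theorem head?_map_rightVertex (h : Assembles G P sys l) :
    l.head?.map rightVertex = P.head?.map Piece.entry := by
  cases h with
  | nil => rfl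
  | run hg _ =>
    obtain ⟨u, hu, hlab⟩ := hg.exists_head
    simp [List.head?_append, hu, rightVertex, Piece.entry, hlab]
  | inner v _ => rfl

theorem forall_head_optionAdj_iff (h : Assembles G P sys l) (p : Piece H) :
    (∀ y ∈ l.head?, OptionAdj H.G p.exit (rightVertex y)) ↔ ∀ q ∈ P.head?, p.Joins q := by
  have hhead := h.head?_map_rightVertex
  cases hl : l.head? <;> cases hP : P.head? <;> simp_all [Piece.Joins]

theorem isChain (h : Assembles G P sys l) (hP : P.IsChain Piece.Joins) :
    l.IsChain (glue G H).Adj := by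
  induction h with
  | nil => exact .nil
  | @run e g P sys l hg hl ih =>
    rw [List.isChain_cons] at hP
    refine List.isChain_append.mpr ⟨hg.isChain_glue, ih hP.2, fun x hx y hy => ?_⟩
    obtain ⟨u, hu, hlab⟩ := hg.exists_getLast
    rw [List.getLast?_map, hu, Option.map_some, Option.mem_some_iff] at hx
    subst hx
    refine glue_adj_iff.mpr (.inr ?_)
    simpa [rightVertex, Piece.exit, hlab] using
      (hl.forall_head_optionAdj_iff (.inl e)).mpr hP.1 y hy
  | @inner v P sys l hl ih =>
    rw [List.isChain_cons] at hP ⊢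
    exact ⟨fun y hy => glue_adj_iff.mpr (.inr ((hl.forall_head_optionAdj_iff _).mpr hP.1 y hy)),
      ih hP.2⟩

theorem exists_of_inl_cons {w : G.V} (h : Assembles G P sys (.inl w :: l)) :
    ∃ e P' g sys' l', P = .inl e :: P' ∧ sys = (w :: g) :: sys' ∧ l = g.map .inl ++ l' ∧
      G.IsRun (w :: g) e ∧ Assembles G P' sys' l' := by
  generalize hL : Sum.inl w :: l = L at h
  cases h with
  | nil => cases hL
  | inner v _ => cases hL
  | @run e g P' sys' l' hg hl =>
    obtain ⟨u, hu, -⟩ := hg.exists_head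
    obtain ⟨g, rfl⟩ : ∃ g', g = u :: g' := ⟨g.tail, by cases g <;> simp_all⟩
    simp only [List.map_cons, List.cons_append, List.cons.injEq, Sum.inl.injEq] at hL
    obtain ⟨rfl, rfl⟩ := hL
    exact ⟨_, _, _, _, _, rfl, rfl, rfl, hg, hl⟩

end Assembles

theorem exists_assembles :
    ∀ {P : List (Piece H)} {sys : List (List G.V)},
      sys.Forall₂ G.IsRun (P.filterMap Sum.getLeft?) → ∃ l, Assembles G P sys l
  | [], _, h => by cases h; exact ⟨[], .nil⟩
  | .inl e :: P, _, h => by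
    obtain ⟨g, sys, hg, hsys, rfl⟩ := List.forall₂_cons_right_iff.mp h
    obtain ⟨l, hl⟩ := exists_assembles hsys
    exact ⟨_, .run hg hl⟩
  | .inr v :: P, _, h => by
    obtain ⟨l, hl⟩ := exists_assembles (P := P) (by simpa [List.filterMap_cons] using h)
    exact ⟨_, .inner v hl⟩

/-- Cut a path of `G ⊕ H` into runs through `G`, split only where a step is not an edge of `G`. -/
theorem exists_assembles_of_isChain :
    ∀ {l : List (G.V ⊕ H.Inner)}, l.IsChain (glue G H).Adj →
      ∃ (P : List (Piece H)) (sys : List (List G.V)),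
        Assembles G P sys l ∧ P.IsChain Piece.Joins
  | [], _ => ⟨[], [], .nil, .nil⟩
  | x :: l, hc => by
    rw [List.isChain_cons] at hc
    obtain ⟨P, sys, hl, hP⟩ := exists_assembles_of_isChain hc.2
    have hjoin : ∀ p : Piece H, rightVertex x = p.exit →
        (∀ y ∈ l.head?, ¬∃ u w, x = .inl u ∧ y = .inl w ∧ G.G.Adj u w) →
        (p :: P).IsChain Piece.Joins := by
      intro p hp hG
      refine List.isChain_cons.mpr ⟨(hl.forall_head_optionAdj_iff p).mp fun y hy => ?_, hP⟩
      rw [← hp]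
      exact (glue_adj_iff.mp (hc.1 y hy)).resolve_left (hG y hy)
    rcases x with u | v
    · by_cases hG : ∃ w, l.head? = some (.inl w) ∧ G.G.Adj u w
      · obtain ⟨w, hw, huw⟩ := hG
        obtain ⟨l', rfl⟩ : ∃ l', l = .inl w :: l' := ⟨l.tail, by cases l <;> simp_all⟩
        obtain ⟨e, P', g, sys', l₀, rfl, rfl, rfl, hg, hl₀⟩ := hl.exists_of_inl_cons
        have hP' : (.inl (G.label u, e.2) :: P' : List (Piece H)).IsChain Piece.Joins :=
          hP.imp_head (x := (.inl e : Piece H)) (y := .inl (G.label u, e.2)) fun h => h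
        exact ⟨_, _, .run (hg.cons huw) hl₀, hP'⟩
      · refine ⟨.inl (G.label u, G.label u) :: P, [u] :: sys, .run (isRun_singleton u) hl,
          hjoin _ rfl ?_⟩
        rintro y hy ⟨u, w, ⟨⟩, rfl, huw⟩
        exact hG ⟨w, hy, huw⟩
    · exact ⟨.inr v :: P, sys, .inner v hl, hjoin _ rfl (by simp)⟩

noncomputable def headLabels (G : BGraph t) (sys : List (List G.V)) : List (Fin t) :=
  sys.filterMap fun g => g.head?.bind G.label

theorem headLabels_nodup {sys : List (List G.V)} (hnd : sys.flatten.Nodup) :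
    (G.headLabels sys).Nodup := by
  refine (List.nodup_flatten.mp hnd).2.filterMap _ ?_
  rintro g g' hdisj i hi i' hi' rfl
  obtain ⟨u, hu, hui⟩ := Option.bind_eq_some_iff.mp hi
  obtain ⟨u', hu', hui'⟩ := Option.bind_eq_some_iff.mp hi'
  rw [label_eq_some] at hui hui'
  exact hdisj (List.mem_of_mem_head? hu) (hui'.symm.trans hui ▸ List.mem_of_mem_head? hu')

namespace Assembles

variable {P : List (Piece H)} {sys : List (List G.V)} {l : List (G.V ⊕ H.Inner)}

/-- A run entered from `H` starts on the boundary, so it contributes a head label. -/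
theorem length_le_headLabels (h : Assembles G P sys l) (hP : P.IsChain Piece.Joins)
    (hentry : ∀ p ∈ P.head?, p.entry.isSome) : sys.length ≤ (G.headLabels sys).length := by
  induction h with
  | nil => simp
  | @run e g P sys l hg _ ih =>
    rw [List.isChain_cons] at hP
    obtain ⟨u, hu, hlab⟩ := hg.exists_head
    obtain ⟨i, hi⟩ := Option.isSome_iff_exists.mp
      (Option.isSome_map.symm.trans (hentry (.inl e) rfl))
    have := ih hP.2 fun q hq => (hP.1 q hq).isSome_entry
    simpa [headLabels, hu, hlab, hi] using this
  | inner v _ ih =>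
    rw [List.isChain_cons] at hP
    exact ih hP.2 fun q hq => (hP.1 q hq).isSome_entry

theorem length_tail_le_headLabels (h : Assembles G P sys l) (hP : P.IsChain Piece.Joins) :
    sys.tail.length ≤ (G.headLabels sys).length := by
  cases h with
  | nil => simp
  | run _ hl =>
    rw [List.isChain_cons] at hP
    exact (hl.length_le_headLabels hP.2 fun q hq => (hP.1 q hq).isSome_entry).trans
      ((List.sublist_cons_self _ _).filterMap _).length_le
  | inner v hl =>
    refine (List.tail_sublist sys).length_le.trans ((inner v hl).length_le_headLabels hP ?_)
    rintro _ ⟨⟩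
    rfl

theorem length_le (h : Assembles G P sys l) (hP : P.IsChain Piece.Joins)
    (hnd : sys.flatten.Nodup) : sys.length ≤ t + 1 := by
  have h₁ := h.length_tail_le_headLabels hP
  have h₂ := (headLabels_nodup (G := G) hnd).length_le_card
  simp only [List.length_tail, Fintype.card_fin] at h₁ h₂
  omega

end Assembles

end Assembly

def runSizes (G : BGraph t) (es : List (EndLabels t)) : Set ℕ :=
  {n | ∃ sys : List (List G.V), sys.Forall₂ G.IsRun es ∧ sys.flatten.Nodup ∧
    sys.flatten.length = n}

/-- A path of `G ⊕ H` passes through `G` in at most `t + 1` runs, so these patterns suffice. -/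
def profile (G : BGraph t) : {es : List (EndLabels t) // es.length ≤ t + 1} → Set ℕ :=
  fun es => G.runSizes es

/-- Replace the runs through `G₁` by runs through `G₂` with the same end labels and total
size. -/
theorem exists_isChain_glue_of_profile_eq {G₁ G₂ H : BGraph t} (h : G₁.profile = G₂.profile)
    {l : List (G₁.V ⊕ H.Inner)} (hc : l.IsChain (glue G₁ H).Adj) (hnd : l.Nodup) :
    ∃ l' : List (G₂.V ⊕ H.Inner),
      l'.IsChain (glue G₂ H).Adj ∧ l'.Nodup ∧ l'.length = l.length := by
  obtain ⟨P, sys, hl, hP⟩ := exists_assembles_of_isChain hc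
  obtain ⟨hsys, hinner⟩ := hl.nodup_iff.mp hnd
  have hlen : (P.filterMap Sum.getLeft?).length ≤ t + 1 :=
    hl.forall₂_isRun.length_eq ▸ hl.length_le hP hsys
  have hsizes : G₁.runSizes (P.filterMap Sum.getLeft?) = G₂.runSizes _ := congrFun h ⟨_, hlen⟩
  have hmem : sys.flatten.length ∈ G₂.runSizes (P.filterMap Sum.getLeft?) :=
    hsizes ▸ ⟨sys, hl.forall₂_isRun, hsys, rfl⟩
  obtain ⟨sys', hsys', hnd', hsize⟩ := hmem
  obtain ⟨l', hl'⟩ := exists_assembles hsys'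
  exact ⟨l', hl'.isChain hP, hl'.nodup_iff.mpr ⟨hnd', hinner⟩,
    by rw [hl'.length_eq, hl.length_eq, hsize]⟩

theorem hasPathGE_glue_of_profile_eq {G₁ G₂ H : BGraph t} (h : G₁.profile = G₂.profile)
    {ℓ : ℤ} (hp : HasPathGE (glue G₁ H) ℓ) : HasPathGE (glue G₂ H) ℓ := by
  obtain ⟨l, hne, hc, hnd, hℓ⟩ := hasPathGE_iff.mp hp
  obtain ⟨l', hc', hnd', hlen⟩ := exists_isChain_glue_of_profile_eq h hc hnd
  refine hasPathGE_iff.mpr ⟨l', ?_, hc', hnd', hlen ▸ hℓ⟩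
  rintro rfl
  exact hne (List.length_eq_zero_iff.mp hlen.symm)

theorem lpEquiv_of_profile_eq {G₁ G₂ : BGraph t} (h : G₁.profile = G₂.profile) :
    LPEquiv G₁ G₂ :=
  ⟨0, fun _ _ => by
    rw [add_zero]
    exact ⟨hasPathGE_glue_of_profile_eq h, hasPathGE_glue_of_profile_eq h.symm⟩⟩

theorem runSizes_subset_Iic {G : BGraph t} {d : ℕ} (htd : treedepthLE G.G d)
    {es : List (EndLabels t)} (hes : es.length ≤ t + 1) :
    G.runSizes es ⊆ Set.Iic ((t + 1) * 2 ^ d) := by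
  rintro _ ⟨sys, hsys, hnd, rfl⟩
  refine le_trans ?_ (Nat.mul_le_mul_right _ hes)
  clear hes
  induction hsys with
  | nil => simp
  | cons hg _ ih =>
    rw [List.flatten_cons, List.nodup_append] at hnd
    have hg := length_lt_two_pow_of_treedepthLE htd hg.1 hnd.1
    have := ih hnd.2.1
    simp only [List.flatten_cons, List.length_append, List.length_cons, Nat.succ_mul]
    omega

theorem finite_image_profile (t d : ℕ) :
    (profile '' {G : BGraph t | treedepthLE G.G d}).Finite := by
  have : Finite {es : List (EndLabels t) // es.length ≤ t + 1} :=
    (List.finite_length_le _ _).to_subtype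
  refine (Set.Finite.pi fun _ => (Set.finite_Iic ((t + 1) * 2 ^ d)).finite_subsets).subset ?_
  rintro _ ⟨G, hG, rfl⟩ es -
  exact runSizes_subset_Iic hG es.2

end BGraph

/-- Longest Path has finite integer index on graphs of treedepth at most `d`. -/
theorem longestPath_finite_integer_index (t d : ℕ) :
    ∃ R : Set (BGraph t), R.Finite ∧
      ∀ G : BGraph t, treedepthLE G.G d → ∃ R₀ ∈ R, LPEquiv G R₀ := by
  obtain ⟨R, hR, hrep⟩ := (BGraph.finite_image_profile t d).exists_finite_transversal
  refine ⟨R, hR, fun G hG => ?_⟩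
  obtain ⟨R₀, hR₀, h⟩ := hrep G hG
  exact ⟨R₀, hR₀, BGraph.lpEquiv_of_profile_eq h⟩
end
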